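/- arXiv:2405.04696 — 7 statements merged into one kernel-verified Lean document; each statement's English description precedes it below -/
import Mathlib

section
/- Let m = 3. If X = (x₁, x₂, x₃) is an ε-equilibrium at separation δ, then ε ≥ 1/12 − Mδ. -/
open MeasureTheory Classical

/-- `Fcdf f y = ∫₀^y f`, the mass of voters in `[0, y]`. -/
noncomputable def Fcdf (f : ℝ → ℝ) (y : ℝ) : ℝ := ∫ z in (0:ℝ)..y, f z

/-- Utility (vote share) of a candidate located at `p`, given the set `S` of the
positions of the other candidates: he receives the voters between the midpoint with his
nearest left neighbour (or `0` if none) and the midpoint with his nearest right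
neighbour (or `1` if none). -/
noncomputable def util (f : ℝ → ℝ) (p : ℝ) (S : Set ℝ) : ℝ :=
  Fcdf f (if {s ∈ S | p < s}.Nonempty then (p + sInf {s ∈ S | p < s}) / 2 else 1)
    - Fcdf f (if {s ∈ S | s < p}.Nonempty then (p + sSup {s ∈ S | s < p}) / 2 else 0)

/-- `X = (x₁, x₂, x₃)` (with `x₁ < x₂ < x₃`) is an `ε`-equilibrium at separation `δ`:
no candidate can move to an admissible location (within `[0,1]`, at distance at least `δ`
from every other candidate) and increase his utility by more than `ε`. -/
def IsEquilibrium3 (f : ℝ → ℝ) (x₁ x₂ x₃ δ ε : ℝ) : Prop :=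
  (∀ x' ∈ Set.Icc (0:ℝ) 1, δ ≤ |x' - x₂| → δ ≤ |x' - x₃| →
      util f x' {x₂, x₃} ≤ util f x₁ {x₂, x₃} + ε) ∧
  (∀ x' ∈ Set.Icc (0:ℝ) 1, δ ≤ |x' - x₁| → δ ≤ |x' - x₃| →
      util f x' {x₁, x₃} ≤ util f x₂ {x₁, x₃} + ε) ∧
  (∀ x' ∈ Set.Icc (0:ℝ) 1, δ ≤ |x' - x₁| → δ ≤ |x' - x₂| →
      util f x' {x₁, x₂} ≤ util f x₃ {x₁, x₂} + ε)

/-- Evaluation of `util` when `p` is to the left of both opponents. -/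
lemma util_pair_left (f : ℝ → ℝ) {p y z : ℝ} (h1 : p < y) (h2 : y < z) :
    util f p {y, z} = Fcdf f ((p + y) / 2) - Fcdf f 0 := by
  have hR : {s ∈ ({y, z} : Set ℝ) | p < s} = {y, z} := by
    ext s
    simp only [Set.mem_setOf_eq, Set.mem_insert_iff, Set.mem_singleton_iff]
    constructor
    · rintro ⟨h, _⟩; exact h
    · rintro (rfl | rfl)
      exacts [⟨Or.inl rfl, h1⟩, ⟨Or.inr rfl, by linarith⟩]
  have hL : {s ∈ ({y, z} : Set ℝ) | s < p} = ∅ := by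
    ext s
    simp only [Set.mem_setOf_eq, Set.mem_insert_iff, Set.mem_singleton_iff,
      Set.mem_empty_iff_false, iff_false, not_and]
    rintro (rfl | rfl) <;> intro h <;> linarith
  rw [util, hR, hL]
  rw [if_pos (Set.insert_nonempty _ _), if_neg (by simp)]
  rw [csInf_pair, min_eq_left h2.le]

/-- Evaluation of `util` when `p` is between the two opponents. -/
lemma util_pair_mid (f : ℝ → ℝ) {p y z : ℝ} (h1 : y < p) (h2 : p < z) :
    util f p {y, z} = Fcdf f ((p + z) / 2) - Fcdf f ((p + y) / 2) := by
  have hR : {s ∈ ({y, z} : Set ℝ) | p < s} = {z} := by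
    ext s
    simp only [Set.mem_setOf_eq, Set.mem_insert_iff, Set.mem_singleton_iff]
    constructor
    · rintro ⟨(rfl | rfl), h⟩
      · linarith
      · rfl
    · rintro rfl; exact ⟨Or.inr rfl, h2⟩
  have hL : {s ∈ ({y, z} : Set ℝ) | s < p} = {y} := by
    ext s
    simp only [Set.mem_setOf_eq, Set.mem_insert_iff, Set.mem_singleton_iff]
    constructor
    · rintro ⟨(rfl | rfl), h⟩
      · rfl
      · linarith
    · rintro rfl; exact ⟨Or.inl rfl, h1⟩
  rw [util, hR, hL]
  rw [if_pos (Set.singleton_nonempty _), if_pos (Set.singleton_nonempty _)]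
  rw [csInf_singleton, csSup_singleton]

/-- Evaluation of `util` when `p` is to the right of both opponents. -/
lemma util_pair_right (f : ℝ → ℝ) {p y z : ℝ} (h1 : y < z) (h2 : z < p) :
    util f p {y, z} = Fcdf f 1 - Fcdf f ((p + z) / 2) := by
  have hR : {s ∈ ({y, z} : Set ℝ) | p < s} = ∅ := by
    ext s
    simp only [Set.mem_setOf_eq, Set.mem_insert_iff, Set.mem_singleton_iff,
      Set.mem_empty_iff_false, iff_false, not_and]
    rintro (rfl | rfl) <;> intro h <;> linarith
  have hL : {s ∈ ({y, z} : Set ℝ) | s < p} = {y, z} := by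
    ext s
    simp only [Set.mem_setOf_eq, Set.mem_insert_iff, Set.mem_singleton_iff]
    constructor
    · rintro ⟨h, _⟩; exact h
    · rintro (rfl | rfl)
      exacts [⟨Or.inl rfl, by linarith⟩, ⟨Or.inr rfl, h2⟩]
  rw [util, hR, hL]
  rw [if_neg (by simp), if_pos (Set.insert_nonempty _ _)]
  rw [csSup_pair, max_eq_right h1.le]

/-- For three candidates, any `ε`-equilibrium at separation `δ`
satisfies `ε ≥ 1/12 − Mδ`. -/
theorem stmt0 (f : ℝ → ℝ) (M δ ε x₁ x₂ x₃ : ℝ)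
    (hM : 0 < M)
    (hfi : IntervalIntegrable f volume 0 1)
    (hf0 : ∀ z ∈ Set.Icc (0:ℝ) 1, 0 ≤ f z)
    (hfM : ∀ z ∈ Set.Icc (0:ℝ) 1, f z ≤ M)
    (hf1 : (∫ z in (0:ℝ)..1, f z) = 1)
    (hδ : 0 < δ) (hMδ : M * δ < 1/1000)
    (h0 : 0 ≤ x₁) (h12 : x₁ + δ ≤ x₂) (h23 : x₂ + δ ≤ x₃) (h3 : x₃ ≤ 1)
    (heq : IsEquilibrium3 f x₁ x₂ x₃ δ ε) :
    1/12 - M * δ ≤ ε := by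
  -- Basic integrability on subintervals of [0,1]
  have hint : ∀ s t : ℝ, 0 ≤ s → s ≤ t → t ≤ 1 → IntervalIntegrable f volume s t := by
    intro s t hs hst ht
    apply hfi.mono_set
    rw [Set.uIcc_of_le hst, Set.uIcc_of_le zero_le_one]
    exact Set.Icc_subset_Icc hs ht
  have hsplit : ∀ s t : ℝ, 0 ≤ s → s ≤ t → t ≤ 1 →
      Fcdf f t - Fcdf f s = ∫ z in s..t, f z := by
    intro s t hs hst ht
    have := intervalIntegral.integral_add_adjacent_intervals
      (hint 0 s le_rfl hs (by linarith)) (hint s t hs hst ht)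
    simp only [Fcdf]
    linarith [this]
  -- F is monotone on [0,1]
  have hmono : ∀ s t : ℝ, 0 ≤ s → s ≤ t → t ≤ 1 → Fcdf f s ≤ Fcdf f t := by
    intro s t hs hst ht
    have h1 := hsplit s t hs hst ht
    have h2 : 0 ≤ ∫ z in s..t, f z :=
      intervalIntegral.integral_nonneg hst
        (fun u hu => hf0 u ⟨le_trans hs hu.1, le_trans hu.2 ht⟩)
    linarith
  -- F is M-Lipschitz on [0,1]
  have hlip : ∀ s t : ℝ, 0 ≤ s → s ≤ t → t ≤ 1 → Fcdf f t - Fcdf f s ≤ M * (t - s) := by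
    intro s t hs hst ht
    have h1 := hsplit s t hs hst ht
    have h2 : (∫ z in s..t, f z) ≤ ∫ _z in s..t, M := by
      apply intervalIntegral.integral_mono_on hst (hint s t hs hst ht)
        intervalIntegrable_const
      exact fun u hu => hfM u ⟨le_trans hs hu.1, le_trans hu.2 ht⟩
    rw [intervalIntegral.integral_const, smul_eq_mul] at h2
    linarith
  have F0 : Fcdf f 0 = 0 := intervalIntegral.integral_same
  have F1 : Fcdf f 1 = 1 := hf1
  have habs : ∀ u v : ℝ, δ ≤ v - u → δ ≤ |u - v| := by
    intro u v h; exact le_abs.mpr (Or.inr (by linarith))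
  have habs' : ∀ u v : ℝ, δ ≤ u - v → δ ≤ |u - v| := by
    intro u v h; exact le_abs.mpr (Or.inl h)
  -- useful bounds
  have hMδ0 : 0 < M * δ := mul_pos hM hδ
  have hx2a : δ ≤ x₂ := by linarith
  have hx2b : x₂ ≤ 1 - δ := by linarith
  have hx1b : x₁ ≤ 1 - 2*δ := by linarith
  -- ε ≥ 0 (trivial deviation of candidate 1 to its own position)
  have hε0 : 0 ≤ ε := by
    have := heq.1 x₁ (Set.mem_Icc.mpr ⟨h0, by linarith⟩)
      (habs _ _ (by linarith)) (habs _ _ (by linarith))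
    linarith
  -- U₂ ≥ 0
  have hU2 : Fcdf f ((x₁ + x₂)/2) ≤ Fcdf f ((x₂ + x₃)/2) :=
    hmono _ _ (by linarith) (by linarith) (by linarith)
  -- (i) candidate 1 deviates to x₂ - δ
  have e1 : Fcdf f x₂ - Fcdf f ((x₁ + x₂)/2) ≤ ε + M * δ / 2 := by
    have d1 := heq.1 (x₂ - δ) (Set.mem_Icc.mpr ⟨by linarith, by linarith⟩)
      (habs _ _ (by linarith)) (habs _ _ (by linarith))
    rw [util_pair_left f (show x₂ - δ < x₂ by linarith) (show x₂ < x₃ by linarith),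
      util_pair_left f (show x₁ < x₂ by linarith) (show x₂ < x₃ by linarith), F0,
      show (x₂ - δ + x₂)/2 = x₂ - δ/2 by ring] at d1
    have l1 := hlip (x₂ - δ/2) x₂ (by linarith) (by linarith) (by linarith)
    have l1' : M * (x₂ - (x₂ - δ/2)) = M * δ / 2 := by ring
    linarith
  -- (ii) candidate 3 deviates to x₂ + δ
  have e2 : Fcdf f ((x₂ + x₃)/2) - Fcdf f x₂ ≤ ε + M * δ / 2 := by
    have d2 := heq.2.2 (x₂ + δ) (Set.mem_Icc.mpr ⟨by linarith, by linarith⟩)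
      (habs' _ _ (by linarith)) (habs' _ _ (by linarith))
    rw [util_pair_right f (show x₁ < x₂ by linarith) (show x₂ < x₂ + δ by linarith),
      util_pair_right f (show x₁ < x₂ by linarith) (show x₂ < x₃ by linarith), F1,
      show (x₂ + δ + x₂)/2 = x₂ + δ/2 by ring,
      show (x₃ + x₂)/2 = (x₂ + x₃)/2 by ring] at d2
    have l2 := hlip x₂ (x₂ + δ/2) (by linarith) (by linarith) (by linarith)
    have l2' : M * (x₂ + δ/2 - x₂) = M * δ / 2 := by ring
    linarith
  -- (iii) candidate 2 deviates to x₁ + δ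
  have e3 : Fcdf f ((x₁ + x₃)/2) - Fcdf f x₁ ≤
      (Fcdf f ((x₂ + x₃)/2) - Fcdf f ((x₁ + x₂)/2)) + ε + M * δ / 2 := by
    have d3 := heq.2.1 (x₁ + δ) (Set.mem_Icc.mpr ⟨by linarith, by linarith⟩)
      (habs' _ _ (by linarith)) (habs _ _ (by linarith))
    rw [util_pair_mid f (show x₁ < x₁ + δ by linarith) (show x₁ + δ < x₃ by linarith),
      util_pair_mid f (show x₁ < x₂ by linarith) (show x₂ < x₃ by linarith),
      show (x₁ + δ + x₃)/2 = (x₁ + x₃ + δ)/2 by ring,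
      show (x₁ + δ + x₁)/2 = x₁ + δ/2 by ring,
      show (x₂ + x₁)/2 = (x₁ + x₂)/2 by ring] at d3
    have m3 := hmono ((x₁ + x₃)/2) ((x₁ + x₃ + δ)/2) (by linarith) (by linarith) (by linarith)
    have l3 := hlip x₁ (x₁ + δ/2) (by linarith) (by linarith) (by linarith)
    have l3' : M * (x₁ + δ/2 - x₁) = M * δ / 2 := by ring
    linarith
  -- (iv) candidate 2 deviates to x₃ - δ
  have e4 : Fcdf f x₃ - Fcdf f ((x₁ + x₃)/2) ≤
      (Fcdf f ((x₂ + x₃)/2) - Fcdf f ((x₁ + x₂)/2)) + ε + M * δ / 2 := by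
    have d4 := heq.2.1 (x₃ - δ) (Set.mem_Icc.mpr ⟨by linarith, by linarith⟩)
      (habs' _ _ (by linarith)) (habs _ _ (by linarith))
    rw [util_pair_mid f (show x₁ < x₃ - δ by linarith) (show x₃ - δ < x₃ by linarith),
      util_pair_mid f (show x₁ < x₂ by linarith) (show x₂ < x₃ by linarith),
      show (x₃ - δ + x₃)/2 = x₃ - δ/2 by ring,
      show (x₃ - δ + x₁)/2 = (x₁ + x₃ - δ)/2 by ring,
      show (x₂ + x₁)/2 = (x₁ + x₂)/2 by ring] at d4
    have m4 := hmono ((x₁ + x₃ - δ)/2) ((x₁ + x₃)/2) (by linarith) (by linarith) (by linarith)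
    have l4 := hlip (x₃ - δ/2) x₃ (by linarith) (by linarith) (by linarith)
    have l4' : M * (x₃ - (x₃ - δ/2)) = M * δ / 2 := by ring
    linarith
  -- (v) candidate 2 deviates to x₁ - δ (or x₁ is close to 0)
  have e5 : Fcdf f x₁ ≤
      (Fcdf f ((x₂ + x₃)/2) - Fcdf f ((x₁ + x₂)/2)) + ε + M * δ := by
    by_cases hc : δ ≤ x₁
    · have d5 := heq.2.1 (x₁ - δ) (Set.mem_Icc.mpr ⟨by linarith, by linarith⟩)
        (habs _ _ (by linarith)) (habs _ _ (by linarith))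
      rw [util_pair_left f (show x₁ - δ < x₁ by linarith) (show x₁ < x₃ by linarith),
        util_pair_mid f (show x₁ < x₂ by linarith) (show x₂ < x₃ by linarith), F0,
        show (x₁ - δ + x₁)/2 = x₁ - δ/2 by ring,
        show (x₂ + x₁)/2 = (x₁ + x₂)/2 by ring] at d5
      have l5 := hlip (x₁ - δ/2) x₁ (by linarith) (by linarith) (by linarith)
      have l5' : M * (x₁ - (x₁ - δ/2)) = M * δ / 2 := by ring
      linarith
    · push_neg at hc
      have l5 := hlip 0 x₁ le_rfl h0 (by linarith)
      rw [F0] at l5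
      have l5' : M * (x₁ - 0) ≤ M * δ :=
        mul_le_mul_of_nonneg_left (by linarith) hM.le
      linarith
  -- (vi) candidate 2 deviates to x₃ + δ (or x₃ is close to 1)
  have e6 : 1 - Fcdf f x₃ ≤
      (Fcdf f ((x₂ + x₃)/2) - Fcdf f ((x₁ + x₂)/2)) + ε + M * δ := by
    by_cases hc : x₃ + δ ≤ 1
    · have d6 := heq.2.1 (x₃ + δ) (Set.mem_Icc.mpr ⟨by linarith, by linarith⟩)
        (habs' _ _ (by linarith)) (habs' _ _ (by linarith))
      rw [util_pair_right f (show x₁ < x₃ by linarith) (show x₃ < x₃ + δ by linarith),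
        util_pair_mid f (show x₁ < x₂ by linarith) (show x₂ < x₃ by linarith), F1,
        show (x₃ + δ + x₃)/2 = x₃ + δ/2 by ring,
        show (x₂ + x₁)/2 = (x₁ + x₂)/2 by ring] at d6
      have l6 := hlip x₃ (x₃ + δ/2) (by linarith) (by linarith) (by linarith)
      have l6' : M * (x₃ + δ/2 - x₃) = M * δ / 2 := by ring
      linarith
    · push_neg at hc
      have l6 := hlip x₃ 1 (by linarith) (by linarith) le_rfl
      rw [F1] at l6
      have l6' : M * (1 - x₃) ≤ M * δ :=
        mul_le_mul_of_nonneg_left (by linarith) hM.le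
      linarith
  -- Combine: 1 ≤ 12 ε + 7 M δ
  linarith
end

section
/- Let m = 3. If X = (x₁, x₂, x₃) is an ε-equilibrium at separation δ, then the middle candidate's left and right votes are both small: U₂^L(X) ≤ ε + Mδ and U₂^R(X) ≤ ε + Mδ. -/
open MeasureTheory Classical

lemma util_left (f : ℝ → ℝ) (a b p : ℝ) (hpa : p < a) (hab : a < b) :
    util f p {a, b} = Fcdf f ((p + a) / 2) := by
  have h1 : {s ∈ ({a, b} : Set ℝ) | p < s} = {a, b} := by
    ext s
    simp only [Set.mem_setOf_eq, Set.mem_insert_iff, Set.mem_singleton_iff]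
    constructor
    · rintro ⟨h, _⟩; exact h
    · rintro (rfl | rfl) <;> constructor <;> first | tauto | linarith
  have h2 : {s ∈ ({a, b} : Set ℝ) | s < p} = ∅ := by
    ext s
    simp only [Set.mem_setOf_eq, Set.mem_insert_iff, Set.mem_singleton_iff,
      Set.mem_empty_iff_false, iff_false, not_and]
    rintro (rfl | rfl) <;> linarith
  have h3 : sInf ({a, b} : Set ℝ) = a := by
    rw [csInf_pair]; exact min_eq_left hab.le
  rw [util, h1, h2, if_pos (Set.insert_nonempty _ _),
    if_neg (by simp [Set.not_nonempty_empty]), h3]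
  simp [Fcdf, intervalIntegral.integral_same]

lemma util_right (f : ℝ → ℝ) (a b p : ℝ) (hab : a < b) (hbp : b < p) :
    util f p {a, b} = Fcdf f 1 - Fcdf f ((p + b) / 2) := by
  have h1 : {s ∈ ({a, b} : Set ℝ) | p < s} = ∅ := by
    ext s
    simp only [Set.mem_setOf_eq, Set.mem_insert_iff, Set.mem_singleton_iff,
      Set.mem_empty_iff_false, iff_false, not_and]
    rintro (rfl | rfl) <;> linarith
  have h2 : {s ∈ ({a, b} : Set ℝ) | s < p} = {a, b} := by
    ext s
    simp only [Set.mem_setOf_eq, Set.mem_insert_iff, Set.mem_singleton_iff]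
    constructor
    · rintro ⟨h, _⟩; exact h
    · rintro (rfl | rfl) <;> constructor <;> first | tauto | linarith
  have h3 : sSup ({a, b} : Set ℝ) = b := by
    rw [csSup_pair]; exact max_eq_right hab.le
  rw [util, h1, h2, if_neg (by simp [Set.not_nonempty_empty]),
    if_pos (Set.insert_nonempty _ _), h3]

lemma Fcdf_diff_le (f : ℝ → ℝ) (M : ℝ)
    (hfi : IntervalIntegrable f volume 0 1)
    (hfM : ∀ z ∈ Set.Icc (0:ℝ) 1, f z ≤ M)
    {a b : ℝ} (h0 : 0 ≤ a) (hab : a ≤ b) (hb : b ≤ 1) :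
    Fcdf f b - Fcdf f a ≤ M * (b - a) := by
  have hia : IntervalIntegrable f volume 0 a :=
    hfi.mono_set (by rw [Set.uIcc_of_le (by norm_num : (0:ℝ) ≤ 1),
      Set.uIcc_of_le h0]; exact Set.Icc_subset_Icc le_rfl (by linarith))
  have hib : IntervalIntegrable f volume 0 b :=
    hfi.mono_set (by rw [Set.uIcc_of_le (by norm_num : (0:ℝ) ≤ 1),
      Set.uIcc_of_le (le_trans h0 hab)]; exact Set.Icc_subset_Icc le_rfl hb)
  have hiab : IntervalIntegrable f volume a b :=
    hfi.mono_set (by rw [Set.uIcc_of_le (by norm_num : (0:ℝ) ≤ 1),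
      Set.uIcc_of_le hab]; exact Set.Icc_subset_Icc h0 hb)
  have hdiff : Fcdf f b - Fcdf f a = ∫ z in a..b, f z := by
    rw [Fcdf, Fcdf, intervalIntegral.integral_interval_sub_left hib hia]
  rw [hdiff]
  calc ∫ z in a..b, f z ≤ ∫ _ in a..b, M := by
        apply intervalIntegral.integral_mono_on hab hiab intervalIntegrable_const
        intro z hz
        exact hfM z ⟨le_trans h0 hz.1, le_trans hz.2 hb⟩
    _ = M * (b - a) := by
        rw [intervalIntegral.integral_const, smul_eq_mul, mul_comm]

/-- In any ε-equilibrium with three candidates, the middle candidate's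
left votes `U₂ᴸ = F(x₂) − F((x₁+x₂)/2)` and right votes `U₂ᴿ = F((x₂+x₃)/2) − F(x₂)`
are both at most `ε + Mδ`. -/
theorem stmt1 (f : ℝ → ℝ) (M δ ε x₁ x₂ x₃ : ℝ)
    (hM : 0 < M)
    (hfi : IntervalIntegrable f volume 0 1)
    (hf0 : ∀ z ∈ Set.Icc (0:ℝ) 1, 0 ≤ f z)
    (hfM : ∀ z ∈ Set.Icc (0:ℝ) 1, f z ≤ M)
    (hf1 : (∫ z in (0:ℝ)..1, f z) = 1)
    (hδ : 0 < δ) (hMδ : M * δ < 1/1000)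
    (h0 : 0 ≤ x₁) (h12 : x₁ + δ ≤ x₂) (h23 : x₂ + δ ≤ x₃) (h3 : x₃ ≤ 1)
    (heq : IsEquilibrium3 f x₁ x₂ x₃ δ ε) :
    Fcdf f x₂ - Fcdf f ((x₁ + x₂) / 2) ≤ ε + M * δ ∧
    Fcdf f ((x₂ + x₃) / 2) - Fcdf f x₂ ≤ ε + M * δ := by
  have hMδ0 : 0 ≤ M * δ := le_of_lt (mul_pos hM hδ)
  constructor
  · -- left votes: candidate 1 deviates to x₂ - δ
    have hadm : x₂ - δ ∈ Set.Icc (0:ℝ) 1 := ⟨by linarith, by linarith⟩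
    have hd2 : δ ≤ |x₂ - δ - x₂| := by
      calc δ ≤ -(x₂ - δ - x₂) := by linarith
        _ ≤ |x₂ - δ - x₂| := neg_le_abs _
    have hd3 : δ ≤ |x₂ - δ - x₃| := by
      calc δ ≤ -(x₂ - δ - x₃) := by linarith
        _ ≤ |x₂ - δ - x₃| := neg_le_abs _
    have key := heq.1 (x₂ - δ) hadm hd2 hd3
    rw [util_left f x₂ x₃ (x₂ - δ) (by linarith) (by linarith),
      util_left f x₂ x₃ x₁ (by linarith) (by linarith)] at key
    have hbd : Fcdf f x₂ - Fcdf f ((x₂ - δ + x₂) / 2) ≤ M * (δ / 2) := by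
      have := Fcdf_diff_le f M hfi hfM
        (a := (x₂ - δ + x₂) / 2) (b := x₂) (by linarith) (by linarith) (by linarith)
      calc Fcdf f x₂ - Fcdf f ((x₂ - δ + x₂) / 2)
          ≤ M * (x₂ - (x₂ - δ + x₂) / 2) := this
        _ = M * (δ / 2) := by ring
    linarith
  · -- right votes: candidate 3 deviates to x₂ + δ
    have hadm : x₂ + δ ∈ Set.Icc (0:ℝ) 1 := ⟨by linarith, by linarith⟩
    have hd1 : δ ≤ |x₂ + δ - x₁| := by
      calc δ ≤ x₂ + δ - x₁ := by linarith
        _ ≤ |x₂ + δ - x₁| := le_abs_self _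
    have hd2 : δ ≤ |x₂ + δ - x₂| := by
      calc δ ≤ x₂ + δ - x₂ := by linarith
        _ ≤ |x₂ + δ - x₂| := le_abs_self _
    have key := heq.2.2 (x₂ + δ) hadm hd1 hd2
    rw [util_right f x₁ x₂ (x₂ + δ) (by linarith) (by linarith),
      util_right f x₁ x₂ x₃ (by linarith) (by linarith)] at key
    have hbd : Fcdf f ((x₂ + δ + x₂) / 2) - Fcdf f x₂ ≤ M * (δ / 2) := by
      have := Fcdf_diff_le f M hfi hfM
        (a := x₂) (b := (x₂ + δ + x₂) / 2) (by linarith) (by linarith) (by linarith)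
      calc Fcdf f ((x₂ + δ + x₂) / 2) - Fcdf f x₂
          ≤ M * ((x₂ + δ + x₂) / 2 - x₂) := this
        _ = M * (δ / 2) := by ring
    have heq2 : Fcdf f ((x₃ + x₂) / 2) = Fcdf f ((x₂ + x₃) / 2) := by ring_nf
    linarith
end

section
/- Let m ≥ 1 and suppose 0 ≤ x₁ < x₂ < ⋯ < x_m ≤ 1 satisfy F(x_k) = k/(m+1) for each k = 1, …, m, with x_{k+1} − x_k ≥ δ for all k. Then X = (x₁, …, x_m) is a 1/(m+1)-equilibrium at separation δ: no candidate can increase his utility by more than 1/(m+1) by deviating to any admissible location. -/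
open MeasureTheory Classical

/-- The set of positions of the candidates other than `i` in the profile `x`. -/
def others {m : ℕ} (x : Fin m → ℝ) (i : Fin m) : Set ℝ := {y | ∃ j, j ≠ i ∧ x j = y}

/-- The profile `x` of `m` candidates is an `ε`-equilibrium at separation `δ`: no
candidate `i` can move to an admissible location `x'` (within `[0,1]`, at distance at
least `δ` from every other candidate) and increase his utility by more than `ε`;
utilities after the deviation are computed with the positions re-sorted. -/
def IsEquilibriumGen (f : ℝ → ℝ) {m : ℕ} (x : Fin m → ℝ) (δ ε : ℝ) : Prop :=
  ∀ i : Fin m, ∀ x' ∈ Set.Icc (0:ℝ) 1, (∀ j, j ≠ i → δ ≤ |x' - x j|) →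
    util f x' (others x i) ≤ util f (x i) (others x i) + ε

lemma Fcdf_mono {f : ℝ → ℝ} (hfi : IntervalIntegrable f volume 0 1)
    (hf0 : ∀ z ∈ Set.Icc (0:ℝ) 1, 0 ≤ f z) {a b : ℝ}
    (ha : 0 ≤ a) (hab : a ≤ b) (hb : b ≤ 1) : Fcdf f a ≤ Fcdf f b := by
  have ha1 : a ≤ 1 := hab.trans hb
  have h1 : IntervalIntegrable f volume 0 a := by
    apply hfi.mono_set
    rw [Set.uIcc_of_le ha, Set.uIcc_of_le zero_le_one]
    exact Set.Icc_subset_Icc le_rfl ha1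
  have h2 : IntervalIntegrable f volume a b := by
    apply hfi.mono_set
    rw [Set.uIcc_of_le hab, Set.uIcc_of_le zero_le_one]
    exact Set.Icc_subset_Icc ha hb
  have heq : Fcdf f a + ∫ z in a..b, f z = Fcdf f b :=
    intervalIntegral.integral_add_adjacent_intervals h1 h2
  have hnn : 0 ≤ ∫ z in a..b, f z :=
    intervalIntegral.integral_nonneg hab (fun u hu => hf0 u ⟨ha.trans hu.1, hu.2.trans hb⟩)
  linarith

/-- If the m candidates are placed at the (m+1)-quantiles of the
voter distribution, i.e. F(x_k) = k/(m+1) (here k = (i : Nat) + 1 for i : Fin m),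
then the profile is a 1/(m+1)-equilibrium at separation delta. -/
theorem stmt8 (m : ℕ) (hm : 1 ≤ m) (f : ℝ → ℝ) (M δ : ℝ) (x : Fin m → ℝ)
    (hM : 0 < M)
    (hfi : IntervalIntegrable f volume 0 1)
    (hf0 : ∀ z ∈ Set.Icc (0:ℝ) 1, 0 ≤ f z)
    (hfM : ∀ z ∈ Set.Icc (0:ℝ) 1, f z ≤ M)
    (hf1 : (∫ z in (0:ℝ)..1, f z) = 1)
    (hδ : 0 < δ) (hMδ : M * δ < 1/1000)
    (hx : ∀ i, x i ∈ Set.Icc (0:ℝ) 1)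
    (hmono : StrictMono x)
    (hsep : ∀ i j : Fin m, (i : ℕ) + 1 = (j : ℕ) → x i + δ ≤ x j)
    (hquant : ∀ k : Fin m, Fcdf f (x k) = ((k : ℕ) + 1 : ℝ) / ((m : ℝ) + 1)) :
    IsEquilibriumGen f x δ (1 / ((m : ℝ) + 1)) := by
  intro i x' hx'mem hadm
  obtain ⟨hx'0, hx'1⟩ := hx'mem
  have hm1 : (0:ℝ) < (m:ℝ) + 1 := by positivity
  set c : ℝ := 1 / ((m:ℝ) + 1) with hc_def
  have hc0 : 0 < c := by positivity
  have hFmono : ∀ a b : ℝ, 0 ≤ a → a ≤ b → b ≤ 1 → Fcdf f a ≤ Fcdf f b :=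
    fun a b ha hab hb => Fcdf_mono hfi hf0 ha hab hb
  have hF0 : Fcdf f 0 = 0 := intervalIntegral.integral_same
  have hF1 : Fcdf f 1 = 1 := hf1
  set S := others x i with hS_def
  have hSfin : S.Finite := Set.Finite.subset (Set.finite_range x)
    (by rintro y ⟨j, _, rfl⟩; exact ⟨j, rfl⟩)
  have hS01 : ∀ s ∈ S, 0 ≤ s ∧ s ≤ 1 := by
    rintro s ⟨j, _, rfl⟩; exact ⟨(hx j).1, (hx j).2⟩
  have hxne : ∀ j, j ≠ i → x j ≠ x' := by
    intro j hj heq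
    have h := hadm j hj
    rw [heq] at h; simp at h; linarith
  have hxi0 : 0 ≤ x i := (hx i).1
  have hxi1 : x i ≤ 1 := (hx i).2
  have hBfin : ∀ p : ℝ, {s ∈ S | s < p}.Finite := fun p => hSfin.subset fun s hs => hs.1
  have hAfin : ∀ p : ℝ, {s ∈ S | p < s}.Finite := fun p => hSfin.subset fun s hs => hs.1
  simp only [util]
  set A' : Set ℝ := {s ∈ S | x' < s} with hA'
  set B' : Set ℝ := {s ∈ S | s < x'} with hB'
  set A0 : Set ℝ := {s ∈ S | x i < s} with hA0
  set B0 : Set ℝ := {s ∈ S | s < x i} with hB0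
  set R' : ℝ := if A'.Nonempty then (x' + sInf A')/2 else 1 with hR'def
  set L' : ℝ := if B'.Nonempty then (x' + sSup B')/2 else 0 with hL'def
  set R0 : ℝ := if A0.Nonempty then (x i + sInf A0)/2 else 1 with hR0def
  set L0 : ℝ := if B0.Nonempty then (x i + sSup B0)/2 else 0 with hL0def
  -- basic bounds
  have hL'0 : 0 ≤ L' := by
    rw [hL'def]; split_ifs with h
    · have hb := h.csSup_mem (hBfin x')
      have := (hS01 _ hb.1).1; linarith
    · exact le_rfl
  have hL'le : L' ≤ x' := by
    rw [hL'def]; split_ifs with h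
    · have hb := h.csSup_mem (hBfin x'); linarith [hb.2]
    · exact hx'0
  have hR'ge : x' ≤ R' := by
    rw [hR'def]; split_ifs with h
    · have ha := h.csInf_mem (hAfin x'); linarith [ha.2]
    · exact hx'1
  have hR'1 : R' ≤ 1 := by
    rw [hR'def]; split_ifs with h
    · have ha := h.csInf_mem (hAfin x'); have := (hS01 _ ha.1).2; linarith
    · exact le_rfl
  have hL00 : 0 ≤ L0 := by
    rw [hL0def]; split_ifs with h
    · have hb := h.csSup_mem (hBfin (x i))
      have := (hS01 _ hb.1).1; linarith
    · exact le_rfl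
  have hL0le : L0 ≤ x i := by
    rw [hL0def]; split_ifs with h
    · have hb := h.csSup_mem (hBfin (x i)); linarith [hb.2]
    · exact hxi0
  have hR0ge : x i ≤ R0 := by
    rw [hR0def]; split_ifs with h
    · have ha := h.csInf_mem (hAfin (x i)); linarith [ha.2]
    · exact hxi1
  have hR01 : R0 ≤ 1 := by
    rw [hR0def]; split_ifs with h
    · have ha := h.csInf_mem (hAfin (x i)); have := (hS01 _ ha.1).2; linarith
    · exact le_rfl
  have hFL'0 : 0 ≤ Fcdf f L' := by
    have h := hFmono 0 L' le_rfl hL'0 (hL'le.trans hx'1); rwa [hF0] at h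
  have hFR'le1 : Fcdf f R' ≤ 1 := by
    have h := hFmono R' 1 (hx'0.trans hR'ge) hR'1 le_rfl; rwa [hF1] at h
  have hutil_nonneg : 0 ≤ Fcdf f R0 - Fcdf f L0 := by
    have h := hFmono L0 R0 hL00 (hL0le.trans hR0ge) hR01; linarith
  rcases lt_trichotomy x' (x i) with hlt | heq | hgt
  · -- x' < x i
    by_cases hbet : ∃ j, j ≠ i ∧ x' < x j ∧ x j < x i
    · -- someone strictly between x' and x i
      obtain ⟨j, hji, hj1, hj2⟩ := hbet
      have hA'ne : A'.Nonempty := ⟨x j, ⟨j, hji, rfl⟩, hj1⟩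
      obtain ⟨⟨j₀, hj₀i, hj₀eq⟩, hx'a⟩ := hA'ne.csInf_mem (hAfin x')
      have hale : sInf A' ≤ x j := csInf_le (hAfin x').bddBelow ⟨⟨j, hji, rfl⟩, hj1⟩
      have haxi : sInf A' < x i := lt_of_le_of_lt hale hj2
      have hR'eq : R' = (x' + sInf A')/2 := by rw [hR'def, if_pos hA'ne]
      have hR'le_a : R' ≤ sInf A' := by rw [hR'eq]; linarith
      have ha1 : sInf A' ≤ 1 := by rw [← hj₀eq]; exact (hx j₀).2
      have hFR' : Fcdf f R' ≤ ((j₀:ℕ) + 1 : ℝ)/((m:ℝ)+1) := by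
        rw [← hquant j₀, hj₀eq]
        exact hFmono R' (sInf A') (hx'0.trans hR'ge) hR'le_a ha1
      rcases Nat.eq_zero_or_pos (j₀ : ℕ) with h0 | hpos
      · have hcle : Fcdf f R' ≤ c := by
          rw [hc_def]; rw [h0] at hFR'; simpa using hFR'
        linarith
      · have hj₁lt_m : (j₀:ℕ) - 1 < m := lt_of_le_of_lt (Nat.sub_le _ _) j₀.isLt
        set j₁ : Fin m := ⟨(j₀:ℕ) - 1, hj₁lt_m⟩ with hj₁def
        have hj₁v : (j₁:ℕ) = (j₀:ℕ) - 1 := rfl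
        have hj₁j₀ : j₁ < j₀ := by rw [Fin.lt_def]; omega
        have hj₀lti : j₀ < i := by
          rw [← hmono.lt_iff_lt, hj₀eq]; exact haxi
        have hj₁i : j₁ ≠ i := ne_of_lt (lt_trans hj₁j₀ hj₀lti)
        have hj₁lta : x j₁ < sInf A' := by rw [← hj₀eq]; exact hmono hj₁j₀
        have hj₁x' : x j₁ < x' := by
          rcases lt_or_ge (x j₁) x' with h | h
          · exact h
          · exfalso
            have hxx : x' < x j₁ := lt_of_le_of_ne h (Ne.symm (hxne j₁ hj₁i))
            have : sInf A' ≤ x j₁ := csInf_le (hAfin x').bddBelow ⟨⟨j₁, hj₁i, rfl⟩, hxx⟩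
            linarith
        have hB'ne : B'.Nonempty := ⟨x j₁, ⟨j₁, hj₁i, rfl⟩, hj₁x'⟩
        have hbge : x j₁ ≤ sSup B' := le_csSup (hBfin x').bddAbove ⟨⟨j₁, hj₁i, rfl⟩, hj₁x'⟩
        have hL'eq : L' = (x' + sSup B')/2 := by rw [hL'def, if_pos hB'ne]
        have hL'geb : x j₁ ≤ L' := by rw [hL'eq]; linarith
        have hFL' : ((j₀:ℕ) : ℝ)/((m:ℝ)+1) ≤ Fcdf f L' := by
          have h1 := hFmono (x j₁) L' (hx j₁).1 hL'geb (hL'le.trans hx'1)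
          rw [hquant j₁] at h1
          have hcast : (((j₁:ℕ):ℝ) + 1) = ((j₀:ℕ):ℝ) := by
            have : (j₁:ℕ) + 1 = (j₀:ℕ) := by omega
            exact_mod_cast this
          rwa [hcast] at h1
        have hdiff : ((j₀:ℕ) + 1 : ℝ)/((m:ℝ)+1) - ((j₀:ℕ):ℝ)/((m:ℝ)+1) = c := by
          rw [hc_def]; ring
        linarith
    · -- nobody strictly between
      push_neg at hbet
      have hAA : A' = A0 := by
        ext s; constructor
        · rintro ⟨⟨j, hji, rfl⟩, hs⟩
          refine ⟨⟨j, hji, rfl⟩, ?_⟩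
          have h := hbet j hji hs
          exact lt_of_le_of_ne h (fun he => hji (hmono.injective he.symm))
        · rintro ⟨hs, hlt2⟩; exact ⟨hs, lt_trans hlt hlt2⟩
      have hFR : Fcdf f R' ≤ Fcdf f R0 := by
        by_cases hne : A0.Nonempty
        · have ha := hne.csInf_mem (hAfin (x i))
          have h0a := (hS01 _ ha.1).1
          have h1a := (hS01 _ ha.1).2
          have hR'eq : R' = (x' + sInf A0)/2 := by rw [hR'def, hAA, if_pos hne]
          have hR0eq : R0 = (x i + sInf A0)/2 := by rw [hR0def, if_pos hne]
          apply hFmono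
          · rw [hR'eq]; linarith
          · rw [hR'eq, hR0eq]; linarith
          · rw [hR0eq]; linarith
        · rw [hR'def, hAA, if_neg hne, hR0def, if_neg hne]
      have hFL : Fcdf f L0 ≤ Fcdf f L' + c := by
        have h1 : Fcdf f L0 ≤ ((i:ℕ) + 1 : ℝ)/((m:ℝ)+1) := by
          rw [← hquant i]; exact hFmono L0 (x i) hL00 hL0le hxi1
        rcases Nat.eq_zero_or_pos (i:ℕ) with h0 | hpos
        · rw [h0] at h1
          simp only [Nat.cast_zero, zero_add] at h1
          rw [hc_def]; linarith
        · have hi₁lt_m : (i:ℕ) - 1 < m := lt_of_le_of_lt (Nat.sub_le _ _) i.isLt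
          set i₁ : Fin m := ⟨(i:ℕ) - 1, hi₁lt_m⟩ with hi₁def
          have hi₁v : (i₁:ℕ) = (i:ℕ) - 1 := rfl
          have hi₁lt : i₁ < i := by rw [Fin.lt_def]; omega
          have hi₁i : i₁ ≠ i := ne_of_lt hi₁lt
          have hi₁xi : x i₁ < x i := hmono hi₁lt
          have hi₁x' : x i₁ < x' := by
            rcases lt_or_ge (x i₁) x' with h | h
            · exact h
            · exfalso
              have hxx : x' < x i₁ := lt_of_le_of_ne h (Ne.symm (hxne i₁ hi₁i))
              exact absurd hi₁xi (not_lt_of_ge (hbet i₁ hi₁i hxx))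
          have hB'ne : B'.Nonempty := ⟨x i₁, ⟨i₁, hi₁i, rfl⟩, hi₁x'⟩
          have hbge : x i₁ ≤ sSup B' := le_csSup (hBfin x').bddAbove ⟨⟨i₁, hi₁i, rfl⟩, hi₁x'⟩
          have hL'eq : L' = (x' + sSup B')/2 := by rw [hL'def, if_pos hB'ne]
          have hL'geb : x i₁ ≤ L' := by rw [hL'eq]; linarith
          have h2 : ((i:ℕ) : ℝ)/((m:ℝ)+1) ≤ Fcdf f L' := by
            have h3 := hFmono (x i₁) L' (hx i₁).1 hL'geb (hL'le.trans hx'1)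
            rw [hquant i₁] at h3
            have hcast : (((i₁:ℕ):ℝ) + 1) = ((i:ℕ):ℝ) := by
              have : (i₁:ℕ) + 1 = (i:ℕ) := by omega
              exact_mod_cast this
            rwa [hcast] at h3
          have hdiff : ((i:ℕ) + 1 : ℝ)/((m:ℝ)+1) - ((i:ℕ):ℝ)/((m:ℝ)+1) = c := by
            rw [hc_def]; ring
          linarith
      linarith
  · -- x' = x i
    have hAA : A' = A0 := by rw [hA', hA0, heq]
    have hBB : B' = B0 := by rw [hB', hB0, heq]
    have hRR : R' = R0 := by rw [hR'def, hR0def, hAA, heq]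
    have hLL : L' = L0 := by rw [hL'def, hL0def, hBB, heq]
    rw [hRR, hLL]; linarith
  · -- x i < x'
    by_cases hbet : ∃ j, j ≠ i ∧ x i < x j ∧ x j < x'
    · obtain ⟨j, hji, hj1, hj2⟩ := hbet
      have hB'ne : B'.Nonempty := ⟨x j, ⟨j, hji, rfl⟩, hj2⟩
      obtain ⟨⟨j₀, hj₀i, hj₀eq⟩, hbx'⟩ := hB'ne.csSup_mem (hBfin x')
      have hble : x j ≤ sSup B' := le_csSup (hBfin x').bddAbove ⟨⟨j, hji, rfl⟩, hj2⟩
      have hbgt : x i < sSup B' := lt_of_lt_of_le hj1 hble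
      have hL'eq : L' = (x' + sSup B')/2 := by rw [hL'def, if_pos hB'ne]
      have hL'geb : sSup B' ≤ L' := by rw [hL'eq]; linarith
      have hb0 : 0 ≤ sSup B' := by rw [← hj₀eq]; exact (hx j₀).1
      have hFL' : ((j₀:ℕ) + 1 : ℝ)/((m:ℝ)+1) ≤ Fcdf f L' := by
        rw [← hquant j₀, hj₀eq]
        exact hFmono (sSup B') L' hb0 hL'geb (hL'le.trans hx'1)
      have hij₀ : i < j₀ := by
        rw [← hmono.lt_iff_lt, hj₀eq]; exact hbgt
      rcases eq_or_lt_of_le (Nat.succ_le_of_lt j₀.isLt) with hlast | hmid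
      · have hmR : ((j₀:ℕ) : ℝ) + 1 = (m:ℝ) := by exact_mod_cast hlast
        have hFL'2 : (m:ℝ)/((m:ℝ)+1) ≤ Fcdf f L' := by
          have h := hFL'; rw [hmR] at h; exact h
        have hmc : 1 - (m:ℝ)/((m:ℝ)+1) = c := by rw [hc_def]; field_simp; ring
        linarith
      · set j₁ : Fin m := ⟨(j₀:ℕ) + 1, hmid⟩ with hj₁def
        have hj₁v : (j₁:ℕ) = (j₀:ℕ) + 1 := rfl
        have hj₀j₁ : j₀ < j₁ := by rw [Fin.lt_def]; omega
        have hj₁i : j₁ ≠ i := by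
          intro h
          have : (j₁:ℕ) = (i:ℕ) := congrArg Fin.val h
          have : (i:ℕ) < (j₀:ℕ) := hij₀
          omega
        have hbj₁ : sSup B' < x j₁ := by rw [← hj₀eq]; exact hmono hj₀j₁
        have hx'j₁ : x' < x j₁ := by
          rcases lt_or_ge x' (x j₁) with h | h
          · exact h
          · exfalso
            have hxx : x j₁ < x' := lt_of_le_of_ne h (hxne j₁ hj₁i)
            have : x j₁ ≤ sSup B' := le_csSup (hBfin x').bddAbove ⟨⟨j₁, hj₁i, rfl⟩, hxx⟩
            linarith
        have hA'ne : A'.Nonempty := ⟨x j₁, ⟨j₁, hj₁i, rfl⟩, hx'j₁⟩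
        have hale : sInf A' ≤ x j₁ := csInf_le (hAfin x').bddBelow ⟨⟨j₁, hj₁i, rfl⟩, hx'j₁⟩
        have hR'eq : R' = (x' + sInf A')/2 := by rw [hR'def, if_pos hA'ne]
        have hR'le : R' ≤ x j₁ := by rw [hR'eq]; linarith
        have hFR' : Fcdf f R' ≤ ((j₀:ℕ) + 1 + 1 : ℝ)/((m:ℝ)+1) := by
          have h := hFmono R' (x j₁) (hx'0.trans hR'ge) hR'le (hx j₁).2
          rw [hquant j₁] at h
          have hcast : (((j₁:ℕ):ℝ) + 1) = ((j₀:ℕ):ℝ) + 1 + 1 := by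
            rw [hj₁v]; push_cast; ring
          rwa [hcast] at h
        have hdiff : ((j₀:ℕ) + 1 + 1 : ℝ)/((m:ℝ)+1) - ((j₀:ℕ) + 1 : ℝ)/((m:ℝ)+1) = c := by
          rw [hc_def]; ring
        linarith
    · push_neg at hbet
      have hBB : B' = B0 := by
        ext s; constructor
        · rintro ⟨⟨j, hji, rfl⟩, hs⟩
          refine ⟨⟨j, hji, rfl⟩, ?_⟩
          by_contra h
          push_neg at h
          have hlt2 : x i < x j := lt_of_le_of_ne h (fun he => hji (hmono.injective he.symm))
          exact absurd hs (not_lt_of_ge (hbet j hji hlt2))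
        · rintro ⟨hsS, hs⟩; exact ⟨hsS, lt_trans hs hgt⟩
      have hFL : Fcdf f L0 ≤ Fcdf f L' := by
        by_cases hne : B0.Nonempty
        · have hb := hne.csSup_mem (hBfin (x i))
          have h0b := (hS01 _ hb.1).1
          have h1b := (hS01 _ hb.1).2
          have hL'eq : L' = (x' + sSup B0)/2 := by rw [hL'def, hBB, if_pos hne]
          have hL0eq : L0 = (x i + sSup B0)/2 := by rw [hL0def, if_pos hne]
          apply hFmono
          · rw [hL0eq]; linarith
          · rw [hL0eq, hL'eq]; linarith
          · rw [hL'eq]; linarith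
        · rw [hL'def, hBB, if_neg hne, hL0def, if_neg hne]
      have hFR : Fcdf f R' ≤ Fcdf f R0 + c := by
        have hR0geF : ((i:ℕ) + 1 : ℝ)/((m:ℝ)+1) ≤ Fcdf f R0 := by
          rw [← hquant i]; exact hFmono (x i) R0 hxi0 hR0ge hR01
        rcases eq_or_lt_of_le (Nat.succ_le_of_lt i.isLt) with hlast | hmid2
        · have hmR : ((i:ℕ) : ℝ) + 1 = (m:ℝ) := by exact_mod_cast hlast
          rw [hmR] at hR0geF
          have hmc : 1 - (m:ℝ)/((m:ℝ)+1) = c := by rw [hc_def]; field_simp; ring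
          linarith
        · set i₂ : Fin m := ⟨(i:ℕ) + 1, hmid2⟩ with hi₂def
          have hi₂v : (i₂:ℕ) = (i:ℕ) + 1 := rfl
          have hii₂lt : i < i₂ := by rw [Fin.lt_def]; omega
          have hi₂i : i₂ ≠ i := (ne_of_lt hii₂lt).symm
          have hii₂ : x i < x i₂ := hmono hii₂lt
          have hx'i₂ : x' ≤ x i₂ := hbet i₂ hi₂i hii₂
          have hx'i₂' : x' < x i₂ := lt_of_le_of_ne hx'i₂ (Ne.symm (hxne i₂ hi₂i))
          have hA'ne : A'.Nonempty := ⟨x i₂, ⟨i₂, hi₂i, rfl⟩, hx'i₂'⟩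
          have hale : sInf A' ≤ x i₂ := csInf_le (hAfin x').bddBelow ⟨⟨i₂, hi₂i, rfl⟩, hx'i₂'⟩
          have hR'eq : R' = (x' + sInf A')/2 := by rw [hR'def, if_pos hA'ne]
          have hR'le2 : R' ≤ x i₂ := by rw [hR'eq]; linarith
          have h2 : Fcdf f R' ≤ ((i:ℕ) + 1 + 1 : ℝ)/((m:ℝ)+1) := by
            have h := hFmono R' (x i₂) (hx'0.trans hR'ge) hR'le2 (hx i₂).2
            rw [hquant i₂] at h
            have hcast : (((i₂:ℕ):ℝ) + 1) = ((i:ℕ):ℝ) + 1 + 1 := by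
              rw [hi₂v]; push_cast; ring
            rwa [hcast] at h
          have hdiff : ((i:ℕ) + 1 + 1 : ℝ)/((m:ℝ)+1) - ((i:ℕ) + 1 : ℝ)/((m:ℝ)+1) = c := by
            rw [hc_def]; ring
          linarith
      linarith
end

section
/- Given constants A > γ > 0 and l ∈ (0,1], there exists an integrable and bounded function g : [0,l] → ℝ with g ≥ 0 satisfying: (i) ∫₀^l g(z) dz = A, and (ii) for all y ∈ [0,l], ∫_{y/2}^{y} g(z) dz ≤ γ. -/
open MeasureTheory

/-- Given constants `A > γ > 0` and `l ∈ (0,1]`, there is an integrable,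
bounded, nonnegative function `g` on `[0,l]` with `∫₀^l g = A` and
`∫_{y/2}^{y} g ≤ γ` for every `y ∈ [0,l]`. -/
theorem stmt9 (A γ l : ℝ) (hγ : 0 < γ) (hA : γ < A) (hl : 0 < l) (hl1 : l ≤ 1) :
    ∃ g : ℝ → ℝ,
      IntervalIntegrable g volume 0 l ∧
      (∃ C : ℝ, ∀ z ∈ Set.Icc (0:ℝ) l, g z ≤ C) ∧
      (∀ z ∈ Set.Icc (0:ℝ) l, 0 ≤ g z) ∧
      ((∫ z in (0:ℝ)..l, g z) = A) ∧
      (∀ y ∈ Set.Icc (0:ℝ) l, (∫ z in (y/2)..y, g z) ≤ γ) := by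
  have hlog2 : 0 < Real.log 2 := Real.log_pos one_lt_two
  set c : ℝ := γ / Real.log 2 with hc_def
  set δ : ℝ := l * Real.exp (-(A / γ) * Real.log 2) with hδ_def
  have hc : 0 < c := div_pos hγ hlog2
  have hδ : 0 < δ := mul_pos hl (Real.exp_pos _)
  have hδl : δ < l := by
    have h1 : Real.exp (-(A / γ) * Real.log 2) < 1 := by
      apply Real.exp_lt_one_iff.mpr
      have : 0 < A / γ := div_pos (hγ.trans hA) hγ
      nlinarith
    calc δ = l * Real.exp (-(A / γ) * Real.log 2) := rfl
    _ < l * 1 := by nlinarith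
    _ = l := mul_one l
  set g : ℝ → ℝ := fun z => if δ ≤ z then c * z⁻¹ else 0 with hg_def
  have hg_nonneg : ∀ z, 0 ≤ g z := by
    intro z
    simp only [hg_def]
    split
    · rename_i h
      exact mul_nonneg hc.le (inv_nonneg.mpr (hδ.le.trans h))
    · exact le_rfl
  have hg_bd : ∀ z, g z ≤ c / δ := by
    intro z
    simp only [hg_def]
    split
    · rename_i h
      rw [div_eq_mul_inv]
      exact mul_le_mul_of_nonneg_left (inv_anti₀ hδ h) hc.le
    · positivity
  have hmeas : Measurable g := by
    apply Measurable.ite (measurableSet_le measurable_const measurable_id)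
    · exact measurable_inv.const_mul c
    · exact measurable_const
  have hint : ∀ a b : ℝ, IntervalIntegrable g volume a b := by
    intro a b
    apply (intervalIntegrable_const (c := c / δ)).mono_fun
      (hmeas.aestronglyMeasurable)
    filter_upwards with x
    rw [Real.norm_eq_abs, Real.norm_eq_abs, abs_of_nonneg (hg_nonneg x),
      abs_of_nonneg (by positivity : (0:ℝ) ≤ c / δ)]
    exact hg_bd x
  -- integral is zero below δ
  have hzero : ∀ a b : ℝ, a ≤ b → b ≤ δ → (∫ z in a..b, g z) = 0 := by
    intro a b hab hb
    have : ∀ᵐ x : ℝ ∂volume, x ∈ Set.uIoc a b → g x = 0 := by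
      have hs : ∀ᵐ x : ℝ ∂volume, x ≠ δ := by
        have : (volume : Measure ℝ) {δ} = 0 := measure_singleton δ
        exact (ae_iff.mpr (by simpa using this))
      filter_upwards [hs] with x hx hxm
      have hxb : x ≤ b := by
        rw [Set.uIoc_of_le hab] at hxm
        exact hxm.2
      have : x < δ := lt_of_le_of_ne (hxb.trans hb) hx
      simp [hg_def, not_le.mpr this]
    rw [intervalIntegral.integral_congr_ae this]
    simp
  -- integral formula above δ
  have hform : ∀ a b : ℝ, δ ≤ a → a ≤ b → (∫ z in a..b, g z) = c * Real.log (b / a) := by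
    intro a b ha hab
    have ha0 : 0 < a := hδ.trans_le ha
    have heq : Set.EqOn g (fun z => c * z⁻¹) (Set.uIcc a b) := by
      intro x hx
      rw [Set.uIcc_of_le hab] at hx
      have : δ ≤ x := ha.trans hx.1
      simp [hg_def, this]
    rw [intervalIntegral.integral_congr heq, intervalIntegral.integral_const_mul,
      integral_inv_of_pos ha0 (ha0.trans_le hab)]
  have hlogδ : Real.log (l / δ) = A / γ * Real.log 2 := by
    rw [hδ_def, Real.log_div hl.ne' (by positivity), Real.log_mul hl.ne'
      (Real.exp_ne_zero _), Real.log_exp]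
    ring
  refine ⟨g, hint 0 l, ⟨c / δ, fun z _ => hg_bd z⟩, fun z _ => hg_nonneg z, ?_, ?_⟩
  · have := intervalIntegral.integral_add_adjacent_intervals (hint 0 δ) (hint δ l)
    rw [← this, hzero 0 δ hδ.le le_rfl, hform δ l le_rfl hδl.le, hlogδ]
    rw [hc_def]
    field_simp
    ring
  · intro y hy
    by_cases h1 : y ≤ δ
    · rw [hzero (y/2) y (by linarith [hy.1]) h1]; exact hγ.le
    · push_neg at h1
      have hy0 : 0 < y := hδ.trans h1
      by_cases h2 : δ ≤ y / 2
      · rw [hform (y/2) y h2 (by linarith)]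
        have : y / (y / 2) = 2 := by field_simp
        rw [this]
        rw [hc_def]; field_simp; exact le_rfl
      · push_neg at h2
        have hsplit := intervalIntegral.integral_add_adjacent_intervals
          (hint (y/2) δ) (hint δ y)
        rw [← hsplit, hzero (y/2) δ h2.le le_rfl, hform δ y le_rfl h1.le, zero_add]
        have hlog : Real.log (y / δ) ≤ Real.log 2 := by
          apply Real.log_le_log (by positivity)
          rw [div_le_iff₀ hδ]
          linarith
        calc c * Real.log (y / δ) ≤ c * Real.log 2 :=
          mul_le_mul_of_nonneg_left hlog hc.le
        _ = γ := by rw [hc_def]; field_simp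
end

section
/- Suppose the density f additionally satisfies F(y) − F(y/2) ≤ γ for all y ∈ [0,1] (for a constant γ > 0). If X = (x₁, …, x_m) is an ε-equilibrium at separation δ for m candidates, then: (i) for every candidate k with 2 ≤ k ≤ m, the left votes satisfy U_k^L(X) ≤ γ; and (ii) for every candidate k with 1 ≤ k ≤ m−1, the right votes satisfy U_k^R(X) ≤ ε + γ + Mδ. -/
open MeasureTheory Classical

/-- If moreover `F(y) − F(y/2) ≤ γ` for all `y ∈ [0,1]`, then in any
ε-equilibrium at separation δ: (i) every candidate `i` with a left neighbour `j` has
left votes `F(x_i) − F((x_j + x_i)/2) ≤ γ`, and (ii) every candidate `i` with a right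
neighbour `j` has right votes `F((x_i + x_j)/2) − F(x_i) ≤ ε + γ + Mδ`. -/
theorem stmt11 (m : ℕ) (f : ℝ → ℝ) (M δ ε γ : ℝ) (x : Fin m → ℝ)
    (hM : 0 < M)
    (hfi : IntervalIntegrable f volume 0 1)
    (hf0 : ∀ z ∈ Set.Icc (0:ℝ) 1, 0 ≤ f z)
    (hfM : ∀ z ∈ Set.Icc (0:ℝ) 1, f z ≤ M)
    (hf1 : (∫ z in (0:ℝ)..1, f z) = 1)
    (hγ : 0 < γ)
    (hγF : ∀ y ∈ Set.Icc (0:ℝ) 1, Fcdf f y - Fcdf f (y / 2) ≤ γ)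
    (hδ : 0 < δ) (hMδ : M * δ < 1/1000)
    (hx : ∀ i, x i ∈ Set.Icc (0:ℝ) 1)
    (hmono : StrictMono x)
    (hsep : ∀ i j : Fin m, (i : ℕ) + 1 = (j : ℕ) → x i + δ ≤ x j)
    (heq : IsEquilibriumGen f x δ ε) :
    (∀ i j : Fin m, (j : ℕ) + 1 = (i : ℕ) →
        Fcdf f (x i) - Fcdf f ((x j + x i) / 2) ≤ γ) ∧
    (∀ i j : Fin m, (i : ℕ) + 1 = (j : ℕ) →
        Fcdf f ((x i + x j) / 2) - Fcdf f (x i) ≤ ε + γ + M * δ) := by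
  -- integrability on subintervals of [0,1]
  have hint : ∀ a b : ℝ, 0 ≤ a → a ≤ b → b ≤ 1 → IntervalIntegrable f volume a b := by
    intro a b ha hab hb1
    exact hfi.mono_set (by
      rw [Set.uIcc_of_le hab, Set.uIcc_of_le (zero_le_one)]
      exact Set.Icc_subset_Icc ha hb1)
  have hdiff : ∀ a b : ℝ, 0 ≤ a → a ≤ b → b ≤ 1 →
      Fcdf f b - Fcdf f a = ∫ z in a..b, f z := by
    intro a b ha hab hb1
    simp only [Fcdf]
    exact intervalIntegral.integral_interval_sub_left
      (hint 0 b le_rfl (ha.trans hab) hb1) (hint 0 a le_rfl ha (hab.trans hb1))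
  have hmono' : ∀ a b : ℝ, 0 ≤ a → a ≤ b → b ≤ 1 → Fcdf f a ≤ Fcdf f b := by
    intro a b ha hab hb1
    have h0 : (0:ℝ) ≤ ∫ z in a..b, f z :=
      intervalIntegral.integral_nonneg hab
        (fun u hu => hf0 u ⟨ha.trans hu.1, hu.2.trans hb1⟩)
    have := hdiff a b ha hab hb1
    linarith
  have hlip : ∀ a b : ℝ, 0 ≤ a → a ≤ b → b ≤ 1 → Fcdf f b - Fcdf f a ≤ M * (b - a) := by
    intro a b ha hab hb1
    have h1 : (∫ z in a..b, f z) ≤ ∫ _z in a..b, M :=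
      intervalIntegral.integral_mono_on hab (hint a b ha hab hb1)
        intervalIntegrable_const
        (fun u hu => hfM u ⟨ha.trans hu.1, hu.2.trans hb1⟩)
    have h2 : (∫ _z in a..b, M) = (b - a) * M := by
      rw [intervalIntegral.integral_const, smul_eq_mul]
    have := hdiff a b ha hab hb1
    rw [h2] at h1
    linarith
  constructor
  · -- Part (i): no equilibrium needed
    intro i j hji
    have hxi := hx i
    have hxj := hx j
    have h1 := hγF (x i) hxi
    have h2 : Fcdf f (x i / 2) ≤ Fcdf f ((x j + x i) / 2) :=
      hmono' _ _ (by linarith [hxi.1]) (by linarith [hxj.1]) (by linarith [hxi.2, hxj.2])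
    linarith
  · -- Part (ii)
    intro i j hij
    have hxi := hx i
    have hxj := hx j
    have hij' : i < j := by
      rw [Fin.lt_def]; omega
    have hxij : x i + δ ≤ x j := hsep i j hij
    have hinej : i ≠ j := Fin.ne_of_val_ne (by omega)
    -- index comparisons
    have hleft : ∀ (l : Fin m) (p : ℝ), l ≠ j → p ≤ x j → x l < p → x l ≤ x i := by
      intro l p hl hp hlp
      have hlj : l < j := by
        rcases lt_trichotomy l j with h | h | h
        · exact h
        · exact absurd h hl
        · exact absurd (hmono h) (by linarith)
      have : (l : ℕ) ≤ (i : ℕ) := by rw [Fin.lt_def] at hlj; omega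
      exact hmono.monotone (Fin.le_def.mpr this)
    have hright : ∀ (l : Fin m) (p : ℝ), l ≠ j → x i < p → p < x l → (j : ℕ) + 1 ≤ (l : ℕ) := by
      intro l p hl hp hlp
      rcases lt_trichotomy l j with h | h | h
      · have : (l : ℕ) ≤ (i : ℕ) := by rw [Fin.lt_def] at h; omega
        have := hmono.monotone (Fin.le_def.mpr this)
        linarith
      · exact absurd h hl
      · rw [Fin.lt_def] at h; omega
    -- deviation point
    set p : ℝ := x i + δ with hp
    have hxip : x i < p := by simp [hp]; linarith
    have hpxj : p ≤ x j := hxij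
    have hpmem : p ∈ Set.Icc (0:ℝ) 1 := ⟨by linarith [hxi.1], by linarith [hxj.2]⟩
    have hadm : ∀ l, l ≠ j → δ ≤ |p - x l| := by
      intro l hl
      rcases lt_trichotomy l j with h | h | h
      · have : (l : ℕ) ≤ (i : ℕ) := by rw [Fin.lt_def] at h; omega
        have hxl : x l ≤ x i := hmono.monotone (Fin.le_def.mpr this)
        rw [abs_of_nonneg (by simp [hp]; linarith)]
        simp [hp]; linarith
      · exact absurd h hl
      · have hjl : (j : ℕ) + 1 ≤ (l : ℕ) := by rw [Fin.lt_def] at h; omega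
        have hjm : (j : ℕ) + 1 < m := lt_of_le_of_lt hjl l.isLt
        set jp : Fin m := ⟨(j : ℕ) + 1, hjm⟩ with hjp
        have h1 : x j + δ ≤ x jp := hsep j jp rfl
        have h2 : x jp ≤ x l := hmono.monotone (Fin.le_def.mpr hjl)
        rw [abs_of_nonpos (by simp [hp]; linarith)]
        simp [hp]; linarith
    have hkey := heq j p hpmem hadm
    -- compute the sSup part (same for both cases, any valid p)
    have hSup : ∀ q : ℝ, x i < q → q ≤ x j →
        ({s ∈ others x j | s < q}.Nonempty ∧ sSup {s ∈ others x j | s < q} = x i) := by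
      intro q hq1 hq2
      have hmem : x i ∈ {s ∈ others x j | s < q} := ⟨⟨i, hinej, rfl⟩, hq1⟩
      refine ⟨⟨x i, hmem⟩, IsGreatest.csSup_eq ⟨hmem, ?_⟩⟩
      rintro s ⟨⟨l, hl, rfl⟩, hs⟩
      exact hleft l q hl hq2 hs
    by_cases hcase : (j : ℕ) + 1 < m
    · set jp : Fin m := ⟨(j : ℕ) + 1, hcase⟩ with hjp
      have hjpne : jp ≠ j := Fin.ne_of_val_ne (by simp [hjp])
      have hjjp : x j + δ ≤ x jp := hsep j jp rfl
      have hxjp := hx jp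
      have hutil : ∀ q : ℝ, x i < q → q ≤ x j →
          util f q (others x j) = Fcdf f ((q + x jp) / 2) - Fcdf f ((q + x i) / 2) := by
        intro q hq1 hq2
        obtain ⟨hne, hsup⟩ := hSup q hq1 hq2
        have hmem : x jp ∈ {s ∈ others x j | q < s} := ⟨⟨jp, hjpne, rfl⟩, by linarith⟩
        have hinf : sInf {s ∈ others x j | q < s} = x jp := by
          refine IsLeast.csInf_eq ⟨hmem, ?_⟩
          rintro s ⟨⟨l, hl, rfl⟩, hs⟩
          have := hright l q hl hq1 hs
          exact hmono.monotone (Fin.le_def.mpr this)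
        simp only [util]
        rw [if_pos ⟨x jp, hmem⟩, if_pos hne, hinf, hsup]
      have hU1 : util f p (others x j) =
          Fcdf f ((p + x jp) / 2) - Fcdf f ((p + x i) / 2) := hutil p hxip hpxj
      have hU2 : util f (x j) (others x j) =
          Fcdf f ((x j + x jp) / 2) - Fcdf f ((x j + x i) / 2) :=
        hutil (x j) (hmono hij') le_rfl
      rw [hU1, hU2] at hkey
      -- γ bound on the right sliver
      have hb : Fcdf f ((x j + x jp) / 2) - Fcdf f ((x j + x jp) / 2 / 2) ≤ γ :=
        hγF _ ⟨by linarith [hxj.1, hxjp.1], by linarith [hxj.2, hxjp.2]⟩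
      have hb2 : Fcdf f ((x j + x jp) / 2 / 2) ≤ Fcdf f ((p + x jp) / 2) :=
        hmono' _ _ (by linarith [hxj.1, hxjp.1]) (by simp only [hp]; linarith [hxi.1, hδ])
          (by simp only [hp]; linarith [hxjp.2])
      -- Lipschitz bound on the left sliver, note (p + x i)/2 = x i + δ/2
      have hlipb : Fcdf f ((p + x i) / 2) - Fcdf f (x i) ≤ M * (δ / 2) := by
        have := hlip (x i) ((p + x i) / 2) hxi.1 (by simp only [hp]; linarith)
          (by simp only [hp]; linarith [hxj.2])
        have harg : (p + x i) / 2 - x i = δ / 2 := by simp only [hp]; ring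
        rw [harg] at this
        linarith
      have : Fcdf f ((x i + x j) / 2) ≤ Fcdf f ((x j + x i) / 2) := by rw [add_comm]
      nlinarith [hM.le, hδ.le]
    · -- no right neighbour of j
      have hutil : ∀ q : ℝ, x i < q → q ≤ x j →
          util f q (others x j) = Fcdf f 1 - Fcdf f ((q + x i) / 2) := by
        intro q hq1 hq2
        obtain ⟨hne, hsup⟩ := hSup q hq1 hq2
        have hempty : ¬ {s ∈ others x j | q < s}.Nonempty := by
          rintro ⟨s, ⟨l, hl, rfl⟩, hs⟩
          have := hright l q hl hq1 hs
          exact hcase (lt_of_le_of_lt this l.isLt)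
        simp only [util]
        rw [if_neg hempty, if_pos hne, hsup]
      have hU1 := hutil p hxip hpxj
      have hU2 := hutil (x j) (hmono hij') le_rfl
      rw [hU1, hU2] at hkey
      have hlipb : Fcdf f ((p + x i) / 2) - Fcdf f (x i) ≤ M * (δ / 2) := by
        have := hlip (x i) ((p + x i) / 2) hxi.1 (by simp only [hp]; linarith)
          (by simp only [hp]; linarith [hxj.2])
        have harg : (p + x i) / 2 - x i = δ / 2 := by simp only [hp]; ring
        rw [harg] at this
        linarith
      have : Fcdf f ((x i + x j) / 2) = Fcdf f ((x j + x i) / 2) := by rw [add_comm]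
      nlinarith [hM.le, hδ.le, hγ.le]
end

section
/- Suppose the density f additionally satisfies F(y) − F(y/2) ≤ γ for all y ∈ [0,1] (for a constant γ > 0). If X = (x₁, …, x_m) is an ε-equilibrium at separation δ for m ≥ 3 candidates, then 1 ≤ (m+3)ε + 2(m+1)(γ + Mδ); equivalently, ε ≥ (1 − 2(m+1)(γ + Mδ))/(m+3). -/
open MeasureTheory Classical

lemma utilEvalBoth (f : ℝ → ℝ) (p : ℝ) (S : Set ℝ) {a b : ℝ}
    (ha : a ∈ S) (hpa : a < p) (hamax : ∀ s ∈ S, s < p → s ≤ a)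
    (hb : b ∈ S) (hpb : p < b) (hbmin : ∀ s ∈ S, p < s → b ≤ s) :
    util f p S = Fcdf f ((p + b) / 2) - Fcdf f ((p + a) / 2) := by
  have h1 : {s ∈ S | p < s}.Nonempty := ⟨b, hb, hpb⟩
  have h2 : {s ∈ S | s < p}.Nonempty := ⟨a, ha, hpa⟩
  have e1 : sInf {s ∈ S | p < s} = b :=
    le_antisymm (csInf_le ⟨b, fun s hs => hbmin s hs.1 hs.2⟩ ⟨hb, hpb⟩)
      (le_csInf h1 fun s hs => hbmin s hs.1 hs.2)
  have e2 : sSup {s ∈ S | s < p} = a :=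
    le_antisymm (csSup_le h2 fun s hs => hamax s hs.1 hs.2)
      (le_csSup ⟨a, fun s hs => hamax s hs.1 hs.2⟩ ⟨ha, hpa⟩)
  rw [util, if_pos h1, if_pos h2, e1, e2]

lemma utilEvalLeft (f : ℝ → ℝ) (p : ℝ) (S : Set ℝ) {a : ℝ}
    (ha : a ∈ S) (hpa : a < p) (hamax : ∀ s ∈ S, s < p → s ≤ a)
    (htop : ∀ s ∈ S, ¬ p < s) :
    util f p S = Fcdf f 1 - Fcdf f ((p + a) / 2) := by
  have h1 : ¬ {s ∈ S | p < s}.Nonempty := by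
    rintro ⟨s, hs, hps⟩; exact htop s hs hps
  have h2 : {s ∈ S | s < p}.Nonempty := ⟨a, ha, hpa⟩
  have e2 : sSup {s ∈ S | s < p} = a :=
    le_antisymm (csSup_le h2 fun s hs => hamax s hs.1 hs.2)
      (le_csSup ⟨a, fun s hs => hamax s hs.1 hs.2⟩ ⟨ha, hpa⟩)
  rw [util, if_neg h1, if_pos h2, e2]

lemma utilEvalRight (f : ℝ → ℝ) (p : ℝ) (S : Set ℝ) {b : ℝ}
    (hb : b ∈ S) (hpb : p < b) (hbmin : ∀ s ∈ S, p < s → b ≤ s)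
    (hbot : ∀ s ∈ S, ¬ s < p) :
    util f p S = Fcdf f ((p + b) / 2) - Fcdf f 0 := by
  have h1 : {s ∈ S | p < s}.Nonempty := ⟨b, hb, hpb⟩
  have h2 : ¬ {s ∈ S | s < p}.Nonempty := by
    rintro ⟨s, hs, hps⟩; exact hbot s hs hps
  have e1 : sInf {s ∈ S | p < s} = b :=
    le_antisymm (csInf_le ⟨b, fun s hs => hbmin s hs.1 hs.2⟩ ⟨hb, hpb⟩)
      (le_csInf h1 fun s hs => hbmin s hs.1 hs.2)
  rw [util, if_pos h1, if_neg h2, e1]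

set_option maxHeartbeats 1000000 in
/-- If moreover `F(y) − F(y/2) ≤ γ` for all `y ∈ [0,1]`, then any
ε-equilibrium at separation δ with m ≥ 3 candidates satisfies
`1 ≤ (m+3)ε + 2(m+1)(γ + Mδ)`. -/
theorem stmt12 (m : ℕ) (hm : 3 ≤ m) (f : ℝ → ℝ) (M δ ε γ : ℝ) (x : Fin m → ℝ)
    (hM : 0 < M)
    (hfi : IntervalIntegrable f volume 0 1)
    (hf0 : ∀ z ∈ Set.Icc (0:ℝ) 1, 0 ≤ f z)
    (hfM : ∀ z ∈ Set.Icc (0:ℝ) 1, f z ≤ M)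
    (hf1 : (∫ z in (0:ℝ)..1, f z) = 1)
    (hγ : 0 < γ)
    (hγF : ∀ y ∈ Set.Icc (0:ℝ) 1, Fcdf f y - Fcdf f (y / 2) ≤ γ)
    (hδ : 0 < δ) (hMδ : M * δ < 1/1000)
    (hx : ∀ i, x i ∈ Set.Icc (0:ℝ) 1)
    (hmono : StrictMono x)
    (hsep : ∀ i j : Fin m, (i : ℕ) + 1 = (j : ℕ) → x i + δ ≤ x j)
    (heq : IsEquilibriumGen f x δ ε) :
    1 ≤ ((m : ℝ) + 3) * ε + 2 * ((m : ℝ) + 1) * (γ + M * δ) := by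
  obtain ⟨n, rfl⟩ : ∃ n, m = n + 3 := ⟨m - 3, by omega⟩
  -- basic facts about the CDF
  have hsub : ∀ a b : ℝ, 0 ≤ a → a ≤ 1 → 0 ≤ b → b ≤ 1 →
      IntervalIntegrable f volume a b := by
    intro a b ha ha1 hb hb1
    apply hfi.mono_set
    rw [Set.uIcc_of_le (zero_le_one' ℝ)]
    exact Set.uIcc_subset_Icc ⟨ha, ha1⟩ ⟨hb, hb1⟩
  have hFadd : ∀ a b : ℝ, 0 ≤ a → a ≤ b → b ≤ 1 →
      Fcdf f b - Fcdf f a = ∫ z in a..b, f z := by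
    intro a b h0 hab hb1
    have h1 : IntervalIntegrable f volume 0 a := hsub 0 a le_rfl zero_le_one h0 (le_trans hab hb1)
    have h2 : IntervalIntegrable f volume a b := hsub a b h0 (le_trans hab hb1) (le_trans h0 hab) hb1
    have h3 := intervalIntegral.integral_add_adjacent_intervals h1 h2
    simp only [Fcdf]
    linarith [h3]
  have hFmono : ∀ a b : ℝ, 0 ≤ a → a ≤ b → b ≤ 1 → Fcdf f a ≤ Fcdf f b := by
    intro a b h0 hab hb1
    have h1 := hFadd a b h0 hab hb1
    have h2 : 0 ≤ ∫ z in a..b, f z :=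
      intervalIntegral.integral_nonneg hab (fun u hu => hf0 u ⟨le_trans h0 hu.1, le_trans hu.2 hb1⟩)
    linarith
  have hFlip : ∀ a b : ℝ, 0 ≤ a → a ≤ b → b ≤ 1 → Fcdf f b - Fcdf f a ≤ M * (b - a) := by
    intro a b h0 hab hb1
    have h1 := hFadd a b h0 hab hb1
    have h2 : (∫ z in a..b, f z) ≤ ∫ z in a..b, M := by
      apply intervalIntegral.integral_mono_on hab
        (hsub a b h0 (le_trans hab hb1) (le_trans h0 hab) hb1) intervalIntegrable_const
      intro z hz; exact hfM z ⟨le_trans h0 hz.1, le_trans hz.2 hb1⟩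
    rw [intervalIntegral.integral_const, smul_eq_mul] at h2
    nlinarith
  have hF0 : Fcdf f 0 = 0 := intervalIntegral.integral_same
  have hF1 : Fcdf f 1 = 1 := hf1
  have hFγ : ∀ a b : ℝ, 0 ≤ b → b / 2 ≤ a → 0 ≤ a → a ≤ 1 → b ≤ 1 →
      Fcdf f b - Fcdf f a ≤ γ := by
    intro a b h0b hba h0a ha1 hb1
    rcases le_or_gt a b with h | h
    · have h1 := hγF b ⟨h0b, hb1⟩
      have h2 : Fcdf f (b / 2) ≤ Fcdf f a := hFmono (b / 2) a (by linarith) hba ha1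
      linarith
    · have h2 := hFmono b a h0b h.le ha1
      linarith
  -- positions as a function on ℕ
  obtain ⟨X, hXeq⟩ : ∃ X : ℕ → ℝ, ∀ k (h : k < n + 3), X k = x ⟨k, h⟩ :=
    ⟨fun k => x ⟨min k (n + 2), by omega⟩,
     fun k h => by simp only [Nat.min_eq_left (show k ≤ n + 2 by omega)]⟩
  have hxX : ∀ l : Fin (n + 3), x l = X (l : ℕ) := fun l => by
    rw [hXeq (l : ℕ) l.isLt]
  have hXmem : ∀ k, k < n + 3 → 0 ≤ X k ∧ X k ≤ 1 := fun k hk => by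
    rw [hXeq k hk]; exact ⟨(hx _).1, (hx _).2⟩
  have hXle : ∀ a b : ℕ, a ≤ b → b < n + 3 → X a ≤ X b := by
    intro a b hab hb
    have ha : a < n + 3 := by omega
    rw [hXeq a ha, hXeq b hb]
    rcases Nat.lt_or_ge a b with h | h
    · exact (hmono (show (⟨a, ha⟩ : Fin (n + 3)) < ⟨b, hb⟩ from h)).le
    · have hab' : a = b := by omega
      subst hab'
      exact le_rfl
  have hXsep' : ∀ a b : ℕ, a < b → b < n + 3 → X a + δ ≤ X b := by
    intro a b hab hb
    have ha : a < n + 3 := by omega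
    have ha1 : a + 1 < n + 3 := by omega
    have h1 := hsep ⟨a, ha⟩ ⟨a + 1, ha1⟩ rfl
    have h2 : X (a + 1) ≤ X b := hXle (a + 1) b (by omega) hb
    calc X a + δ = x ⟨a, ha⟩ + δ := by rw [hXeq a ha]
      _ ≤ x ⟨a + 1, ha1⟩ := h1
      _ = X (a + 1) := (hXeq (a + 1) ha1).symm
      _ ≤ X b := h2
  -- ε is nonnegative
  have hε : 0 ≤ ε := by
    have h0 : 0 < n + 3 := by omega
    have hpt : x ⟨0, h0⟩ = X 0 := hxX _
    have hdist : ∀ l : Fin (n + 3), l ≠ ⟨0, h0⟩ → δ ≤ |x ⟨0, h0⟩ - x l| := by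
      intro l hl
      have hlv : (l : ℕ) ≠ 0 := fun h => hl (Fin.ext h)
      rw [hxX l, hpt]
      have := hXsep' 0 (l : ℕ) (by omega) l.isLt
      exact le_abs.mpr (Or.inr (by linarith))
    have := heq ⟨0, h0⟩ (x ⟨0, h0⟩) (hx _) hdist
    linarith
  -- util of interior candidate k+1
  have hUint : ∀ k (hk2 : k + 2 < n + 3) (hk1 : k + 1 < n + 3),
      util f (x ⟨k + 1, hk1⟩) (others x ⟨k + 1, hk1⟩)
        = Fcdf f ((X (k + 1) + X (k + 2)) / 2) - Fcdf f ((X k + X (k + 1)) / 2) := by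
    intro k hk2 hk1
    have hk0 : k < n + 3 := by omega
    have hpt : x ⟨k + 1, hk1⟩ = X (k + 1) := hxX _
    have hs1 : X k + δ ≤ X (k + 1) := hXsep' k (k + 1) (by omega) hk1
    have hs2 : X (k + 1) + δ ≤ X (k + 2) := hXsep' (k + 1) (k + 2) (by omega) hk2
    rw [hpt, show (X k + X (k + 1)) / 2 = (X (k + 1) + X k) / 2 from by ring]
    apply utilEvalBoth
    · exact ⟨⟨k, hk0⟩, by simp only [ne_eq, Fin.mk.injEq]; omega, (hXeq k hk0).symm⟩
    · linarith
    · rintro s ⟨l, hl, rfl⟩ hsp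
      have hlv : (l : ℕ) ≠ k + 1 := fun hh => hl (Fin.ext hh)
      rw [hxX l] at hsp ⊢
      rcases Nat.lt_or_ge (l : ℕ) (k + 1) with hcase | hcase
      · exact hXle _ _ (by omega) hk0
      · have := hXle (k + 2) _ (by omega) l.isLt
        linarith
    · exact ⟨⟨k + 2, hk2⟩, by simp only [ne_eq, Fin.mk.injEq]; omega, (hXeq (k + 2) hk2).symm⟩
    · linarith
    · rintro s ⟨l, hl, rfl⟩ hsp
      have hlv : (l : ℕ) ≠ k + 1 := fun hh => hl (Fin.ext hh)
      rw [hxX l] at hsp ⊢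
      rcases Nat.lt_or_ge (l : ℕ) (k + 1) with hcase | hcase
      · have := hXle (l : ℕ) k (by omega) hk0
        linarith
      · exact hXle (k + 2) _ (by omega) l.isLt
  have hlast : n + 2 < n + 3 := by omega
  -- util of the last candidate
  have hUlast : util f (x ⟨n + 2, hlast⟩) (others x ⟨n + 2, hlast⟩)
      = 1 - Fcdf f ((X (n + 1) + X (n + 2)) / 2) := by
    have h1 : n + 1 < n + 3 := by omega
    have hpt : x ⟨n + 2, hlast⟩ = X (n + 2) := hxX _
    have hs : X (n + 1) + δ ≤ X (n + 2) := hXsep' (n + 1) (n + 2) (by omega) hlast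
    rw [hpt, show (X (n + 1) + X (n + 2)) / 2 = (X (n + 2) + X (n + 1)) / 2 from by ring, ← hF1]
    apply utilEvalLeft
    · exact ⟨⟨n + 1, h1⟩, by simp only [ne_eq, Fin.mk.injEq]; omega, (hXeq (n + 1) h1).symm⟩
    · linarith
    · rintro s ⟨l, hl, rfl⟩ _
      have hlv : (l : ℕ) ≠ n + 2 := fun hh => hl (Fin.ext hh)
      rw [hxX l]
      exact hXle _ _ (by omega) h1
    · rintro s ⟨l, hl, rfl⟩
      have hlv : (l : ℕ) ≠ n + 2 := fun hh => hl (Fin.ext hh)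
      rw [hxX l]
      have := hXle (l : ℕ) (n + 1) (by omega) h1
      exact not_lt.mpr (by linarith)
  -- stealing the right half-gap: R_k ≤ ε + γ + Mδ for k + 2 < n + 3
  have hR : ∀ k, k + 2 < n + 3 →
      Fcdf f ((X k + X (k + 1)) / 2) - Fcdf f (X k) ≤ ε + γ + M * δ := by
    intro k hk2
    have hk1 : k + 1 < n + 3 := by omega
    have hk0 : k < n + 3 := by omega
    have hXk := hXmem k hk0
    have hXk1 := hXmem (k + 1) hk1
    have hXk2 := hXmem (k + 2) hk2
    have hs1 : X k + δ ≤ X (k + 1) := hXsep' k (k + 1) (by omega) hk1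
    have hs2 : X (k + 1) + δ ≤ X (k + 2) := hXsep' (k + 1) (k + 2) (by omega) hk2
    have hpmem : X k + δ ∈ Set.Icc (0:ℝ) 1 := ⟨by linarith [hXk.1], by linarith [hXk1.2]⟩
    have hdist : ∀ l : Fin (n + 3), l ≠ ⟨k + 1, hk1⟩ → δ ≤ |X k + δ - x l| := by
      intro l hl
      have hlv : (l : ℕ) ≠ k + 1 := fun hh => hl (Fin.ext hh)
      rw [hxX l]
      rcases Nat.lt_or_ge (l : ℕ) (k + 1) with h | h
      · have : X (l : ℕ) ≤ X k := hXle _ _ (by omega) hk0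
        exact le_abs.mpr (Or.inl (by linarith))
      · have : X (k + 2) ≤ X (l : ℕ) := hXle _ _ (by omega) l.isLt
        exact le_abs.mpr (Or.inr (by linarith))
    have hkey := heq ⟨k + 1, hk1⟩ (X k + δ) hpmem hdist
    have e1 : util f (X k + δ) (others x ⟨k + 1, hk1⟩)
        = Fcdf f ((X k + δ + X (k + 2)) / 2) - Fcdf f ((X k + δ + X k) / 2) := by
      apply utilEvalBoth
      · exact ⟨⟨k, hk0⟩, by simp only [ne_eq, Fin.mk.injEq]; omega, (hXeq k hk0).symm⟩
      · linarith
      · rintro s ⟨l, hl, rfl⟩ hsp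
        have hlv : (l : ℕ) ≠ k + 1 := fun hh => hl (Fin.ext hh)
        rw [hxX l] at hsp ⊢
        rcases Nat.lt_or_ge (l : ℕ) (k + 1) with h | h
        · exact hXle _ _ (by omega) hk0
        · have := hXle (k + 2) _ (by omega) l.isLt
          linarith
      · exact ⟨⟨k + 2, hk2⟩, by simp only [ne_eq, Fin.mk.injEq]; omega, (hXeq (k + 2) hk2).symm⟩
      · linarith
      · rintro s ⟨l, hl, rfl⟩ hsp
        have hlv : (l : ℕ) ≠ k + 1 := fun hh => hl (Fin.ext hh)
        rw [hxX l] at hsp ⊢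
        rcases Nat.lt_or_ge (l : ℕ) (k + 1) with h | h
        · have := hXle (l : ℕ) k (by omega) hk0
          linarith
        · exact hXle (k + 2) _ (by omega) l.isLt
    rw [e1, hUint k hk2 hk1] at hkey
    rw [show (X k + δ + X k) / 2 = X k + δ / 2 from by ring] at hkey
    have hγ1 : Fcdf f ((X (k + 1) + X (k + 2)) / 2) - Fcdf f ((X k + δ + X (k + 2)) / 2) ≤ γ := by
      have hm1 : Fcdf f ((X (k + 1) + X (k + 2)) / 2) ≤ Fcdf f (X (k + 2)) :=
        hFmono _ _ (by linarith [hXk1.1, hXk2.1]) (by linarith) hXk2.2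
      have hm2 : Fcdf f (X (k + 2)) - Fcdf f ((X k + δ + X (k + 2)) / 2) ≤ γ :=
        hFγ _ _ hXk2.1 (by linarith [hXk.1]) (by linarith [hXk.1, hXk2.1])
          (by linarith [hXk2.2]) hXk2.2
      linarith
    have hδ1 : Fcdf f (X k + δ / 2) - Fcdf f (X k) ≤ M * δ := by
      have h2 := hFlip (X k) (X k + δ / 2) hXk.1 (by linarith) (by linarith [hXk1.2])
      have h3 : M * (X k + δ / 2 - X k) = M * δ / 2 := by ring
      nlinarith [mul_pos hM hδ]
    linarith
  -- the last right half-gap: R_{n+1} ≤ ε + Mδ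
  have hR' : Fcdf f ((X (n + 1) + X (n + 2)) / 2) - Fcdf f (X (n + 1)) ≤ ε + M * δ := by
    have h1 : n + 1 < n + 3 := by omega
    have hXa := hXmem (n + 1) h1
    have hXb := hXmem (n + 2) hlast
    have hs : X (n + 1) + δ ≤ X (n + 2) := hXsep' (n + 1) (n + 2) (by omega) hlast
    have hpmem : X (n + 1) + δ ∈ Set.Icc (0:ℝ) 1 := ⟨by linarith [hXa.1], by linarith [hXb.2]⟩
    have hdist : ∀ l : Fin (n + 3), l ≠ ⟨n + 2, hlast⟩ → δ ≤ |X (n + 1) + δ - x l| := by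
      intro l hl
      have hlv : (l : ℕ) ≠ n + 2 := fun hh => hl (Fin.ext hh)
      rw [hxX l]
      have := hXle (l : ℕ) (n + 1) (by omega) h1
      exact le_abs.mpr (Or.inl (by linarith))
    have hkey := heq ⟨n + 2, hlast⟩ (X (n + 1) + δ) hpmem hdist
    have e1 : util f (X (n + 1) + δ) (others x ⟨n + 2, hlast⟩)
        = Fcdf f 1 - Fcdf f ((X (n + 1) + δ + X (n + 1)) / 2) := by
      apply utilEvalLeft
      · exact ⟨⟨n + 1, h1⟩, by simp only [ne_eq, Fin.mk.injEq]; omega, (hXeq (n + 1) h1).symm⟩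
      · linarith
      · rintro s ⟨l, hl, rfl⟩ _
        have hlv : (l : ℕ) ≠ n + 2 := fun hh => hl (Fin.ext hh)
        rw [hxX l]
        exact hXle _ _ (by omega) h1
      · rintro s ⟨l, hl, rfl⟩
        have hlv : (l : ℕ) ≠ n + 2 := fun hh => hl (Fin.ext hh)
        rw [hxX l]
        have := hXle (l : ℕ) (n + 1) (by omega) h1
        exact not_lt.mpr (by linarith)
    rw [e1, hUlast, hF1] at hkey
    rw [show (X (n + 1) + δ + X (n + 1)) / 2 = X (n + 1) + δ / 2 from by ring] at hkey
    have hδ1 : Fcdf f (X (n + 1) + δ / 2) - Fcdf f (X (n + 1)) ≤ M * δ := by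
      have h2 := hFlip (X (n + 1)) (X (n + 1) + δ / 2) hXa.1 (by linarith) (by linarith [hXb.2])
      have h3 : M * (X (n + 1) + δ / 2 - X (n + 1)) = M * δ / 2 := by ring
      nlinarith [mul_pos hM hδ]
    linarith
  -- combined right half-gap bound
  have hRgen : ∀ k, k + 2 < n + 4 →
      Fcdf f ((X k + X (k + 1)) / 2) - Fcdf f (X k) ≤ ε + γ + M * δ := by
    intro k hk
    rcases Nat.lt_or_ge (k + 2) (n + 3) with h | h
    · exact hR k h
    · have hkeq : k = n + 1 := by omega
      subst hkeq
      have h2 := hR'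
      simp only [show n + 1 + 1 = n + 2 from rfl]
      linarith
  -- left half-gap bound from the γ-condition
  have hL : ∀ k, k + 1 < n + 3 →
      Fcdf f (X (k + 1)) - Fcdf f ((X k + X (k + 1)) / 2) ≤ γ := by
    intro k hk
    have hXk := hXmem k (by omega)
    have hXk1 := hXmem (k + 1) hk
    have hle : X k ≤ X (k + 1) := hXle k (k + 1) (by omega) hk
    exact hFγ ((X k + X (k + 1)) / 2) (X (k + 1)) hXk1.1 (by linarith [hXk.1])
      (by linarith [hXk.1, hXk1.1]) (by linarith [hXk1.2]) hXk1.2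
  -- bound on the leftmost mass A = F(X 0)
  have hMδ0 : 0 < M * δ := mul_pos hM hδ
  have hA : Fcdf f (X 0) ≤ 2 * ε + 3 * γ + 2 * (M * δ) := by
    have h0 : 0 < n + 3 := by omega
    have h1m : 1 < n + 3 := by omega
    have h2m : 2 < n + 3 := by omega
    have hX0 := hXmem 0 h0
    rcases lt_or_ge (X 0) δ with h | h
    · have h2 := hFlip 0 (X 0) le_rfl hX0.1 hX0.2
      rw [hF0] at h2
      have h3 : M * (X 0 - 0) ≤ M * δ := mul_le_mul_of_nonneg_left (by linarith) hM.le
      linarith [hγ.le]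
    · have hdist : ∀ l : Fin (n + 3), l ≠ ⟨1, h1m⟩ → δ ≤ |0 - x l| := by
        intro l hl
        rw [hxX l, zero_sub, abs_neg, abs_of_nonneg (hXmem _ l.isLt).1]
        exact le_trans h (hXle 0 _ (by omega) l.isLt)
      have hpmem : (0:ℝ) ∈ Set.Icc (0:ℝ) 1 := ⟨le_rfl, zero_le_one⟩
      have hkey := heq ⟨1, h1m⟩ 0 hpmem hdist
      have e1 : util f 0 (others x ⟨1, h1m⟩) = Fcdf f ((0 + X 0) / 2) - Fcdf f 0 := by
        apply utilEvalRight
        · exact ⟨⟨0, h0⟩, by simp only [ne_eq, Fin.mk.injEq]; omega, (hXeq 0 h0).symm⟩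
        · linarith
        · rintro s ⟨l, hl, rfl⟩ _
          rw [hxX l]
          exact hXle 0 _ (by omega) l.isLt
        · rintro s ⟨l, hl, rfl⟩
          rw [hxX l]
          exact not_lt.mpr (hXmem _ l.isLt).1
      have hU1 := hUint 0 h2m h1m
      simp only [Nat.zero_add] at hU1
      rw [e1, hU1] at hkey
      rw [show ((0:ℝ) + X 0) / 2 = X 0 / 2 from by ring, hF0] at hkey
      have hAγ : Fcdf f (X 0) - Fcdf f (X 0 / 2) ≤ γ :=
        hFγ (X 0 / 2) (X 0) hX0.1 le_rfl (by linarith [hX0.1]) (by linarith [hX0.2]) hX0.2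
      have hu1a := hRgen 1 (by omega)
      simp only [show (1:ℕ) + 1 = 2 from rfl] at hu1a
      have hu1b := hL 0 (by omega)
      simp only [Nat.zero_add] at hu1b
      linarith
  -- bound on the rightmost mass B = 1 - F(X (n+2))
  have hB : 1 - Fcdf f (X (n + 2)) ≤ 2 * ε + γ + 2 * (M * δ) := by
    have hXb := hXmem (n + 2) hlast
    rcases le_or_gt (X (n + 2) + δ) 1 with h | h
    · have hj1 : n + 1 < n + 3 := by omega
      have hdist : ∀ l : Fin (n + 3), l ≠ ⟨n + 1, hj1⟩ → δ ≤ |X (n + 2) + δ - x l| := by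
        intro l hl
        rw [hxX l]
        have := hXle (l : ℕ) (n + 2) (by omega) hlast
        exact le_abs.mpr (Or.inl (by linarith))
      have hpmem : X (n + 2) + δ ∈ Set.Icc (0:ℝ) 1 := ⟨by linarith [hXb.1], h⟩
      have hkey := heq ⟨n + 1, hj1⟩ (X (n + 2) + δ) hpmem hdist
      have e1 : util f (X (n + 2) + δ) (others x ⟨n + 1, hj1⟩)
          = Fcdf f 1 - Fcdf f ((X (n + 2) + δ + X (n + 2)) / 2) := by
        apply utilEvalLeft
        · exact ⟨⟨n + 2, hlast⟩, by simp only [ne_eq, Fin.mk.injEq]; omega, (hXeq (n + 2) hlast).symm⟩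
        · linarith
        · rintro s ⟨l, hl, rfl⟩ _
          rw [hxX l]
          exact hXle _ _ (by omega) hlast
        · rintro s ⟨l, hl, rfl⟩
          rw [hxX l]
          have := hXle (l : ℕ) (n + 2) (by omega) hlast
          exact not_lt.mpr (by linarith)
      have hUn := hUint n (by omega) hj1
      rw [e1, hUn, hF1] at hkey
      rw [show (X (n + 2) + δ + X (n + 2)) / 2 = X (n + 2) + δ / 2 from by ring] at hkey
      have hδ1 : Fcdf f (X (n + 2) + δ / 2) - Fcdf f (X (n + 2)) ≤ M * δ := by
        have h2 := hFlip (X (n + 2)) (X (n + 2) + δ / 2) hXb.1 (by linarith) (by linarith)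
        have h3 : M * (X (n + 2) + δ / 2 - X (n + 2)) = M * δ / 2 := by ring
        nlinarith
      have hl2 := hL n (by omega)
      linarith [hR']
    · have h2 := hFlip (X (n + 2)) 1 hXb.1 hXb.2 le_rfl
      rw [hF1] at h2
      have h3 : M * (1 - X (n + 2)) ≤ M * δ := mul_le_mul_of_nonneg_left (by linarith) hM.le
      linarith [hε, hγ.le]
  -- the boundary values g
  obtain ⟨g, hg0, hgmid, hgtop⟩ :
      ∃ g : ℕ → ℝ, g 0 = 0 ∧
        (∀ k, k + 1 < n + 3 → g (k + 1) = Fcdf f ((X k + X (k + 1)) / 2)) ∧ g (n + 3) = 1 := by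
    refine ⟨fun k => if k = 0 then 0 else if k < n + 3 then
      Fcdf f ((X (k - 1) + X k) / 2) else 1, by simp, ?_, by simp⟩
    intro k hk
    simp only [Nat.succ_ne_zero, if_false, hk, if_true, Nat.add_sub_cancel]
  -- per-term bound for the middle candidates
  have hMid : ∀ k, k < n + 1 → g (k + 2) - g (k + 1) ≤ ε + 2 * γ + M * δ := by
    intro k hk
    have e2 := hgmid (k + 1) (by omega)
    simp only [show k + 1 + 1 = k + 2 from rfl] at e2
    have e1 := hgmid k (by omega)
    rw [e2, e1]
    have h1 := hRgen (k + 1) (by omega)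
    simp only [show k + 1 + 1 = k + 2 from rfl] at h1
    have h2 := hL k (by omega)
    linarith
  -- middle sum bound
  have e2 : ∑ k ∈ Finset.range (n + 1), (g (k + 2) - g (k + 1)) = g (n + 2) - g 1 := by
    have h := Finset.sum_range_sub (fun k => g (k + 1)) (n + 1)
    simp only [show ∀ k : ℕ, k + 1 + 1 = k + 2 from fun _ => rfl] at h
    simpa using h
  have hbound : g (n + 2) - g 1 ≤ ((n : ℝ) + 1) * (ε + 2 * γ + M * δ) := by
    rw [← e2]
    have h1 : ∑ k ∈ Finset.range (n + 1), (g (k + 2) - g (k + 1))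
        ≤ ∑ _k ∈ Finset.range (n + 1), (ε + 2 * γ + M * δ) :=
      Finset.sum_le_sum fun k hk => hMid k (Finset.mem_range.mp hk)
    rw [Finset.sum_const, Finset.card_range, nsmul_eq_mul] at h1
    push_cast at h1
    linarith
  -- first and last terms
  have hterm0 : g 1 - g 0 ≤ 3 * ε + 4 * γ + 3 * (M * δ) := by
    have e := hgmid 0 (by omega)
    simp only [Nat.zero_add] at e
    rw [e, hg0]
    have h1 := hRgen 0 (by omega)
    simp only [Nat.zero_add] at h1
    linarith [hA]
  have htermlast : g (n + 3) - g (n + 2) ≤ 2 * ε + 2 * γ + 2 * (M * δ) := by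
    have e := hgmid (n + 1) (by omega)
    simp only [show n + 1 + 1 = n + 2 from rfl] at e
    rw [hgtop, e]
    have h1 := hL (n + 1) (by omega)
    simp only [show n + 1 + 1 = n + 2 from rfl] at h1
    linarith [hB]
  -- putting everything together
  have htot : (1:ℝ) = (g 1 - g 0) + (g (n + 2) - g 1) + (g (n + 3) - g (n + 2)) := by
    rw [hg0, hgtop]; ring
  have hn : (0:ℝ) ≤ (n : ℝ) := Nat.cast_nonneg n
  push_cast
  nlinarith [hterm0, hbound, htermlast, htot, mul_nonneg hn hMδ0.le, hγ, hMδ0, hε,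
    mul_nonneg hn hε, mul_nonneg hn hγ.le]
end

section
/- Let 0 ≤ x₁ < x₃ ≤ 1 with F(x₁) = 2/7 and F(x₃) = 5/7, let δ > 0 satisfy Mδ < 10⁻³ and x₁ + δ ≤ x₃ − δ, and for x ∈ [x₁ + δ, x₃ − δ] let g(x) = F((x + x₃)/2) − F((x₁ + x)/2) (the utility of a middle candidate placed at x between candidates at x₁ and x₃). Then there exists x ∈ [x₁ + δ, x₃ − δ] with g(x) ≥ 1/7. -/
open MeasureTheory

lemma Fcdf_bounds (f : ℝ → ℝ) (M : ℝ)
    (hfi : IntervalIntegrable f volume 0 1)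
    (hf0 : ∀ z ∈ Set.Icc (0:ℝ) 1, 0 ≤ f z)
    (hfM : ∀ z ∈ Set.Icc (0:ℝ) 1, f z ≤ M)
    {a b : ℝ} (h0 : 0 ≤ a) (hab : a ≤ b) (hb : b ≤ 1) :
    0 ≤ Fcdf f b - Fcdf f a ∧ Fcdf f b - Fcdf f a ≤ M * (b - a) := by
  have sub : ∀ {c d : ℝ}, 0 ≤ c → c ≤ d → d ≤ 1 → IntervalIntegrable f volume c d := by
    intro c d hc hcd hd
    refine hfi.mono_set ?_
    rw [Set.uIcc_of_le hcd, Set.uIcc_of_le (show (0:ℝ) ≤ 1 by norm_num)]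
    exact Set.Icc_subset_Icc hc hd
  have hia : IntervalIntegrable f volume 0 a := sub le_rfl h0 (hab.trans hb)
  have hib : IntervalIntegrable f volume 0 b := sub le_rfl (h0.trans hab) hb
  have hiab : IntervalIntegrable f volume a b := sub h0 hab hb
  have heq : Fcdf f b - Fcdf f a = ∫ z in a..b, f z := by
    unfold Fcdf
    rw [intervalIntegral.integral_interval_sub_left hib hia]
  constructor
  · rw [heq]
    exact intervalIntegral.integral_nonneg hab
      (fun u hu => hf0 u ⟨h0.trans hu.1, hu.2.trans hb⟩)
  · rw [heq]
    calc ∫ z in a..b, f z ≤ ∫ _z in a..b, M := by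
          apply intervalIntegral.integral_mono_on hab hiab intervalIntegrable_const
          exact fun u hu => hfM u ⟨h0.trans hu.1, hu.2.trans hb⟩
      _ = M * (b - a) := by simp [mul_comm]

/-- If `F(x₁) = 2/7` and `F(x₃) = 5/7`, then some admissible middle
position `x ∈ [x₁ + δ, x₃ − δ]` gives a middle candidate at least `1/7` votes, where his
votes are `g(x) = F((x + x₃)/2) − F((x₁ + x)/2)`. -/
theorem stmt13 (f : ℝ → ℝ) (M δ x₁ x₃ : ℝ)
    (hM : 0 < M)
    (hfi : IntervalIntegrable f volume 0 1)
    (hf0 : ∀ z ∈ Set.Icc (0:ℝ) 1, 0 ≤ f z)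
    (hfM : ∀ z ∈ Set.Icc (0:ℝ) 1, f z ≤ M)
    (hf1 : (∫ z in (0:ℝ)..1, f z) = 1)
    (h0 : 0 ≤ x₁) (h13 : x₁ < x₃) (h3 : x₃ ≤ 1)
    (hF1 : Fcdf f x₁ = 2/7) (hF3 : Fcdf f x₃ = 5/7)
    (hδ : 0 < δ) (hMδ : M * δ < 1/1000)
    (hgap : x₁ + δ ≤ x₃ - δ) :
    ∃ x ∈ Set.Icc (x₁ + δ) (x₃ - δ),
      1/7 ≤ Fcdf f ((x + x₃) / 2) - Fcdf f ((x₁ + x) / 2) := by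
  -- key F-difference bounds
  have B := fun {a b : ℝ} (h0' : 0 ≤ a) (hab : a ≤ b) (hb : b ≤ 1) =>
    Fcdf_bounds f M hfi hf0 hfM h0' hab hb
  -- F(x₁+δ/2) - F(x₁) ≤ M δ/2
  have h1 : Fcdf f ((x₁ + (x₁ + δ)) / 2) - Fcdf f x₁ ≤ M * δ / 2 := by
    have := (B (a := x₁) (b := (x₁ + (x₁ + δ)) / 2) h0 (by linarith) (by linarith)).2
    linarith [this]
  -- F(x₃) - F(x₃ - δ/2) ≤ M δ/2
  have h2 : Fcdf f x₃ - Fcdf f (((x₃ - δ) + x₃) / 2) ≤ M * δ / 2 := by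
    have := (B (a := ((x₃ - δ) + x₃) / 2) (b := x₃) (by linarith) (by linarith) h3).2
    linarith [this]
  -- middle piece nonneg
  have h3' : 0 ≤ Fcdf f (((x₁ + δ) + x₃) / 2) - Fcdf f ((x₁ + (x₃ - δ)) / 2) := by
    exact (B (a := (x₁ + (x₃ - δ)) / 2) (b := ((x₁ + δ) + x₃) / 2) (by linarith) (by linarith) (by linarith)).1
  set gA := Fcdf f (((x₁ + δ) + x₃) / 2) - Fcdf f ((x₁ + (x₁ + δ)) / 2) with hgA
  set gB := Fcdf f (((x₃ - δ) + x₃) / 2) - Fcdf f ((x₁ + (x₃ - δ)) / 2) with hgB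
  have hsum : 3/7 - M * δ ≤ gA + gB := by
    rw [hgA, hgB]
    linarith [h1, h2, h3', hF1, hF3]
  rcases le_total gA gB with h | h
  · exact ⟨x₃ - δ, ⟨hgap, le_refl _⟩, by rw [hgB] at *; linarith⟩
  · exact ⟨x₁ + δ, ⟨le_refl _, hgap⟩, by rw [hgA] at *; linarith⟩
end
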